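/- arXiv:1606.03342 — 7 statements merged into one kernel-verified Lean document; each statement's English description precedes it below -/
import Mathlib

section
/- Let n ≥ 1, let ν be the product exponential probability measure on ℝ₊ⁿ, and set ψ(t) = (1/(n−1)!)·∫ₜ^∞ e^{-x} x^{n−1} dx for t ≥ 0. The following are equivalent: (a) for every Borel set A ⊆ ℝ₊ⁿ with 0 < ν(A) < 1/2 and every s > 0 with ψ(s) = ν(A), one has ν⁺(A) ≥ s^{n−1}e^{-s}/(n−1)!; (b) for every set B ⊆ ℝ₊ⁿ that is a finite union of open ℓ₁-balls, every h > 0 with ν(B^h) < 1/2, and all s, s' > 0 with ψ(s) = ν(B) and ψ(s') = ν(B^h), one has s' ≤ s − h. Moreover, (b) is also equivalent to the statement (a) restricted to sets A that are finite unions of open ℓ₁-balls. -/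
/-!
Write `ν (B^t) = ψ (u t)`. For a finite union `B` of `ℓ₁`-balls of `ℝ₊ⁿ`, `B^t` is the union of
the same balls with radii increased by `t` (the orthant is convex), so the isoperimetric inequality
for `B^t` bounds the right Dini derivative of the antitone function `u` by `-1`; hence
`u h ≤ u 0 - h`. Conversely, a Borel set `A` is approximated from inside by a finite union `B` of
`δ`-balls centred in `A` (inner regularity and compactness), and the neighbourhood inequality for
`B` and `h - δ` yields `ψ (ψ⁻¹ (ν A) - h) ≤ ν (A^h)`. Dividing `ν (A^h) - ν A ≥ ψ (s - h) - ψ s`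
by `h` and letting `h → 0` gives `ν⁺ A ≥ -ψ' s = s^{n-1} e^{-s} / (n-1)!`.
-/

open MeasureTheory Real Set Filter
open scoped ENNReal

/-- The positive orthant `ℝ₊ⁿ = [0,∞)ⁿ`. -/
def posOrthant (n : ℕ) : Set (Fin n → ℝ) := {x | ∀ i, 0 ≤ x i}

/-- The product exponential measure on `ℝ₊ⁿ`, with density `e^{-(x₁+⋯+xₙ)}`. -/
noncomputable def expMeasure (n : ℕ) : Measure (Fin n → ℝ) :=
  (volume.restrict (posOrthant n)).withDensity
    (fun x => ENNReal.ofReal (Real.exp (-(∑ i, x i))))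

/-- The open `h`-neighbourhood of `A` inside `ℝ₊ⁿ` with respect to the `ℓ₁`-distance. -/
def l1Nbhd (n : ℕ) (A : Set (Fin n → ℝ)) (h : ℝ) : Set (Fin n → ℝ) :=
  {x | x ∈ posOrthant n ∧ ∃ y ∈ A, ∑ i, |x i - y i| < h}

/-- The boundary measure `ν⁺(A) = liminf_{h→0⁺} (ν(A^h) − ν(A))/h`. -/
noncomputable def bdryMeasure (n : ℕ) (A : Set (Fin n → ℝ)) : ℝ≥0∞ :=
  Filter.liminf
    (fun h : ℝ => (expMeasure n (l1Nbhd n A h) - expMeasure n A) / ENNReal.ofReal h)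
    (nhdsWithin 0 (Set.Ioi 0))

/-- The closed `ℓ₁`-ball `tB₁ⁿ` of radius `t` centred at the origin. -/
def l1Ball (n : ℕ) (t : ℝ) : Set (Fin n → ℝ) := {x | ∑ i, |x i| ≤ t}

/-- `B` is a finite union of open `ℓ₁`-balls in `ℝ₊ⁿ`. -/
def IsFiniteUnionOfL1Balls (n : ℕ) (B : Set (Fin n → ℝ)) : Prop :=
  ∃ (m : ℕ) (c : Fin m → (Fin n → ℝ)) (r : Fin m → ℝ),
    (∀ j, c j ∈ posOrthant n ∧ 0 < r j) ∧
    B = ⋃ j, {x | x ∈ posOrthant n ∧ ∑ i, |x i - c j i| < r j}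

/-- `ψ(t) = (1/(n−1)!) ∫ₜ^∞ e^{-x} x^{n−1} dx`, the measure of the complement of the
simplex of radius `t`. -/
noncomputable def psiFn (n : ℕ) (t : ℝ) : ℝ :=
  (1 / (Nat.factorial (n - 1) : ℝ)) * ∫ x in Set.Ioi t, Real.exp (-x) * x ^ (n - 1)

open scoped Topology

noncomputable def psiDensity (n : ℕ) (t : ℝ) : ℝ :=
  t ^ (n - 1) * Real.exp (-t) / (Nat.factorial (n - 1) : ℝ)

def IsoperimetricIneq (n : ℕ) (A : Set (Fin n → ℝ)) : Prop :=
  0 < expMeasure n A → expMeasure n A < (1 : ℝ≥0∞) / 2 →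
    ∀ s : ℝ, 0 < s → psiFn n s = (expMeasure n A).toReal →
      ENNReal.ofReal (psiDensity n s) ≤ bdryMeasure n A

def NbhdIneq (n : ℕ) (B : Set (Fin n → ℝ)) : Prop :=
  ∀ h : ℝ, 0 < h → expMeasure n (l1Nbhd n B h) < (1 : ℝ≥0∞) / 2 →
    ∀ s s' : ℝ, 0 < s → 0 < s' → psiFn n s = (expMeasure n B).toReal →
      psiFn n s' = (expMeasure n (l1Nbhd n B h)).toReal → s' ≤ s - h

section Psi

variable (n : ℕ)

lemma continuous_psiDensity : Continuous (psiDensity n) := by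
  unfold psiDensity; fun_prop

lemma psiDensity_pos {t : ℝ} (ht : 0 < t) : 0 < psiDensity n t := by
  unfold psiDensity; positivity

lemma psiDensity_nonneg {t : ℝ} (ht : 0 ≤ t) : 0 ≤ psiDensity n t := by
  unfold psiDensity; positivity

lemma integrableOn_psiDensity_Ioi_zero : IntegrableOn (psiDensity n) (Ioi 0) := by
  have h := (Real.GammaIntegral_convergent (Nat.cast_add_one_pos (n - 1))).div_const
    ((n - 1).factorial : ℝ)
  refine IntegrableOn.congr_fun h (fun x _ => ?_) measurableSet_Ioi
  simp only [psiDensity, add_sub_cancel_right, Real.rpow_natCast]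
  ring

lemma integrableOn_psiDensity_Ioi (t : ℝ) : IntegrableOn (psiDensity n) (Ioi t) := by
  have hcover : Ioi t ⊆ Icc t 0 ∪ Ioi 0 := fun x (hx : t < x) =>
    (le_or_gt x 0).imp (fun h => ⟨hx.le, h⟩) id
  exact (((continuous_psiDensity n).integrableOn_Icc).union
    (integrableOn_psiDensity_Ioi_zero n)).mono_set hcover

lemma psiFn_eq_integral (t : ℝ) : psiFn n t = ∫ x in Ioi t, psiDensity n x := by
  rw [psiFn, ← integral_const_mul]
  refine setIntegral_congr_fun measurableSet_Ioi fun x _ => ?_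
  simp only [psiDensity]
  ring

lemma psiFn_zero : psiFn n 0 = 1 := by
  have hΓ := Real.Gamma_eq_integral (Nat.cast_add_one_pos (n - 1))
  simp only [add_sub_cancel_right, Real.rpow_natCast, Real.Gamma_nat_eq_factorial] at hΓ
  rw [psiFn, ← hΓ]
  field_simp

lemma psiFn_eq_one_sub (t : ℝ) : psiFn n t = 1 - ∫ x in (0 : ℝ)..t, psiDensity n x := by
  rw [← intervalIntegral.integral_Ioi_sub_Ioi' (integrableOn_psiDensity_Ioi n 0)
    (integrableOn_psiDensity_Ioi n t), ← psiFn_eq_integral, ← psiFn_eq_integral, psiFn_zero]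
  ring

lemma hasDerivAt_psiFn (t : ℝ) : HasDerivAt (psiFn n) (-psiDensity n t) t := by
  have h := ((continuous_psiDensity n).integral_hasStrictDerivAt 0 t).hasDerivAt.const_sub 1
  exact h.congr_of_eventuallyEq (Eventually.of_forall (psiFn_eq_one_sub n))

lemma continuous_psiFn : Continuous (psiFn n) :=
  continuous_iff_continuousAt.2 fun t => (hasDerivAt_psiFn n t).continuousAt

lemma strictAntiOn_psiFn : StrictAntiOn (psiFn n) (Ici 0) := by
  refine strictAntiOn_of_hasDerivWithinAt_neg (convex_Ici 0) (continuous_psiFn n).continuousOn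
    (fun t _ => (hasDerivAt_psiFn n t).hasDerivWithinAt) fun t ht => ?_
  rw [interior_Ici] at ht
  exact neg_neg_of_pos (psiDensity_pos n ht)

lemma tendsto_psiFn_atTop : Tendsto (psiFn n) atTop (𝓝 0) := by
  have h := (intervalIntegral_tendsto_integral_Ioi 0 (integrableOn_psiDensity_Ioi n 0)
    tendsto_id).const_sub 1
  rw [← psiFn_eq_integral, psiFn_zero, sub_self] at h
  exact h.congr fun t => (psiFn_eq_one_sub n t).symm

lemma psiFn_pos {t : ℝ} (ht : 0 ≤ t) : 0 < psiFn n t := by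
  have hnonneg : 0 ≤ psiFn n (t + 1) := by
    rw [psiFn_eq_integral]
    exact setIntegral_nonneg measurableSet_Ioi fun x hx =>
      psiDensity_nonneg n (by linarith [mem_Ioi.1 hx])
  exact hnonneg.trans_lt (strictAntiOn_psiFn n ht (by simp; linarith) (by linarith))

lemma exists_pos_psiFn_eq {v : ℝ} (hv₀ : 0 < v) (hv₁ : v < 1) : ∃ z, 0 < z ∧ psiFn n z = v := by
  obtain ⟨T, hT⟩ := ((tendsto_psiFn_atTop n).eventually (gt_mem_nhds hv₀)).and
    (eventually_ge_atTop 0) |>.exists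
  obtain ⟨z, hz, hzv⟩ := intermediate_value_Ioc' hT.2 (continuous_psiFn n).continuousOn
    ⟨hT.1.le, (psiFn_zero n).symm ▸ hv₁⟩
  exact ⟨z, hz.1, hzv⟩

end Psi

section Geometry

variable {n : ℕ}

def orthantBall (n : ℕ) (c : Fin n → ℝ) (r : ℝ) : Set (Fin n → ℝ) :=
  {x | x ∈ posOrthant n ∧ ∑ i, |x i - c i| < r}

lemma orthantBall_mono (c : Fin n → ℝ) {r r' : ℝ} (h : r ≤ r') :
    orthantBall n c r ⊆ orthantBall n c r' :=
  fun _ hx => ⟨hx.1, hx.2.trans_le h⟩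

lemma sum_abs_sub_le_add (x y z : Fin n → ℝ) :
    ∑ i, |x i - z i| ≤ ∑ i, |x i - y i| + ∑ i, |y i - z i| := by
  rw [← Finset.sum_add_distrib]
  exact Finset.sum_le_sum fun i _ => abs_sub_le _ _ _

lemma continuous_sum_abs_sub (c : Fin n → ℝ) :
    Continuous fun x : Fin n → ℝ => ∑ i, |x i - c i| := by
  fun_prop

lemma measurableSet_posOrthant : MeasurableSet (posOrthant n) := by
  rw [posOrthant, ofPred_forall]
  exact MeasurableSet.iInter fun i => measurableSet_le measurable_const (measurable_pi_apply i)

lemma measurableSet_orthantBall (c : Fin n → ℝ) (r : ℝ) : MeasurableSet (orthantBall n c r) :=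
  measurableSet_posOrthant.inter
    (isOpen_lt (continuous_sum_abs_sub c) continuous_const).measurableSet

lemma subset_l1Nbhd {A : Set (Fin n → ℝ)} (hA : A ⊆ posOrthant n) {h : ℝ} (hh : 0 < h) :
    A ⊆ l1Nbhd n A h :=
  fun x hx => ⟨hA hx, x, hx, by simpa using hh⟩

lemma l1Nbhd_mono {A B : Set (Fin n → ℝ)} (hAB : A ⊆ B) (h : ℝ) : l1Nbhd n A h ⊆ l1Nbhd n B h :=
  fun _ ⟨hx, y, hy, hxy⟩ => ⟨hx, y, hAB hy, hxy⟩

lemma l1Nbhd_l1Nbhd_subset (A : Set (Fin n → ℝ)) (δ ε : ℝ) :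
    l1Nbhd n (l1Nbhd n A δ) ε ⊆ l1Nbhd n A (δ + ε) := by
  rintro x ⟨hx, y, ⟨-, z, hz, hyz⟩, hxy⟩
  exact ⟨hx, z, hz, (sum_abs_sub_le_add x y z).trans_lt (by linarith)⟩

lemma l1Nbhd_iUnion {ι : Type*} (A : ι → Set (Fin n → ℝ)) (h : ℝ) :
    l1Nbhd n (⋃ j, A j) h = ⋃ j, l1Nbhd n (A j) h := by
  ext x
  simp only [l1Nbhd, mem_iUnion, mem_ofPred_eq]
  constructor
  · rintro ⟨hx, y, ⟨j, hy⟩, hxy⟩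
    exact ⟨j, hx, y, hy, hxy⟩
  · rintro ⟨j, hx, y, hy, hxy⟩
    exact ⟨hx, y, ⟨j, hy⟩, hxy⟩

/-- A point `x` of the larger ball lies within `ε` of the point `c + r/(r+ε) • (x - c)` of the
smaller one, which stays in the orthant by convexity. -/
lemma l1Nbhd_orthantBall {c : Fin n → ℝ} (hc : c ∈ posOrthant n) {r ε : ℝ} (hr : 0 < r)
    (hε : 0 < ε) : l1Nbhd n (orthantBall n c r) ε = orthantBall n c (r + ε) := by
  ext x
  constructor
  · rintro ⟨hx, y, ⟨-, hyc⟩, hxy⟩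
    exact ⟨hx, (sum_abs_sub_le_add x y c).trans_lt (by linarith)⟩
  · rintro ⟨hx, hxc⟩
    set θ := r / (r + ε)
    have hθ₀ : 0 ≤ θ := by positivity
    have hθ₁ : 1 - θ = ε / (r + ε) := by
      rw [eq_div_iff (by positivity), sub_mul, div_mul_cancel₀ _ (by positivity)]
      ring
    have hθ₁' : 0 ≤ 1 - θ := hθ₁ ▸ by positivity
    set D := ∑ i, |x i - c i|
    refine ⟨hx, fun i => c i + θ * (x i - c i), ⟨fun i => ?_, ?_⟩, ?_⟩
    · nlinarith [hx i, hc i]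
    · have hsum : ∑ i, |c i + θ * (x i - c i) - c i| = θ * D := by
        rw [Finset.mul_sum]
        refine Finset.sum_congr rfl fun i _ => ?_
        rw [add_sub_cancel_left, abs_mul, abs_of_nonneg hθ₀]
      rw [hsum, div_mul_eq_mul_div, div_lt_iff₀ (by positivity)]
      nlinarith
    · have hsum : ∑ i, |x i - (c i + θ * (x i - c i))| = (1 - θ) * D := by
        rw [Finset.mul_sum]
        refine Finset.sum_congr rfl fun i _ => ?_
        rw [show x i - (c i + θ * (x i - c i)) = (1 - θ) * (x i - c i) by ring, abs_mul,
          abs_of_nonneg hθ₁']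
      rw [hsum, hθ₁, div_mul_eq_mul_div, div_lt_iff₀ (by positivity)]
      nlinarith

lemma l1Nbhd_iUnion_orthantBall {ι : Type*} {c : ι → Fin n → ℝ} {r : ι → ℝ}
    (hc : ∀ j, c j ∈ posOrthant n) (hr : ∀ j, 0 < r j) {ε : ℝ} (hε : 0 < ε) :
    l1Nbhd n (⋃ j, orthantBall n (c j) (r j)) ε = ⋃ j, orthantBall n (c j) (r j + ε) := by
  rw [l1Nbhd_iUnion]
  exact iUnion_congr fun j => l1Nbhd_orthantBall (hc j) (hr j) hε

lemma IsFiniteUnionOfL1Balls.measurableSet {B : Set (Fin n → ℝ)}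
    (hB : IsFiniteUnionOfL1Balls n B) : MeasurableSet B := by
  obtain ⟨m, c, r, -, rfl⟩ := hB
  exact MeasurableSet.iUnion fun j => measurableSet_orthantBall (c j) (r j)

lemma IsFiniteUnionOfL1Balls.subset_posOrthant {B : Set (Fin n → ℝ)}
    (hB : IsFiniteUnionOfL1Balls n B) : B ⊆ posOrthant n := by
  obtain ⟨m, c, r, -, rfl⟩ := hB
  exact iUnion_subset fun j _ hx => hx.1

lemma isFiniteUnionOfL1Balls_biUnion (t : Finset (Fin n → ℝ)) (ht : ∀ c ∈ t, c ∈ posOrthant n)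
    {r : ℝ} (hr : 0 < r) : IsFiniteUnionOfL1Balls n (⋃ c ∈ t, orthantBall n c r) := by
  refine ⟨t.card, fun j => t.equivFin.symm j, fun _ => r,
    fun j => ⟨ht _ (t.equivFin.symm j).2, hr⟩, ?_⟩
  rw [← Finset.set_biUnion_coe, biUnion_eq_iUnion]
  exact (t.equivFin.symm.surjective.iUnion_comp fun c : (t : Set (Fin n → ℝ)) =>
    orthantBall n c r).symm

end Geometry

section Dini

variable {u : ℝ → ℝ} {a b : ℝ}

/-- The supremum `T` of the times up to which the slope bound holds is attained, because `u` can
only jump downwards; and `T < b` is impossible since the bound then propagates beyond `T`. -/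
lemma AntitoneOn.le_sub_mul_of_frequently_lt {c : ℝ} (hab : a ≤ b) (hu : AntitoneOn u (Icc a b))
    (hstep : ∀ t ∈ Ico a b, ∃ᶠ ε in 𝓝[>] 0, u (t + ε) < u t - c * ε) :
    u b ≤ u a - c * (b - a) := by
  set S := {t ∈ Icc a b | u t ≤ u a - c * (t - a)}
  have haS : a ∈ S := ⟨⟨le_rfl, hab⟩, by simp⟩
  have hbdd : BddAbove S := ⟨b, fun t ht => ht.1.2⟩
  set T := sSup S
  have hT : T ∈ Icc a b := ⟨le_csSup hbdd haS, csSup_le ⟨a, haS⟩ fun t ht => ht.1.2⟩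
  have hTS : u T ≤ u a - c * (T - a) := by
    refine le_of_forall_pos_le_add fun η hη => ?_
    have hη' : 0 < η / (|c| + 1) := by positivity
    obtain ⟨τ, hτS, hτ⟩ := exists_lt_of_lt_csSup ⟨a, haS⟩ (sub_lt_self T hη')
    have hτT : τ ≤ T := le_csSup hbdd hτS
    have huτ : u T ≤ u τ := hu hτS.1 hT hτT
    have hcτ : c * (T - τ) ≤ η := by
      calc c * (T - τ) ≤ (|c| + 1) * (T - τ) :=
            mul_le_mul_of_nonneg_right (by linarith [le_abs_self c]) (by linarith)
        _ ≤ η := by rw [← le_div_iff₀' (by positivity)]; linarith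
    linarith [hτS.2]
  rcases hT.2.eq_or_lt with hTb | hTb
  · rwa [hTb] at hTS
  obtain ⟨ε, hεu, hε⟩ := ((hstep T ⟨hT.1, hTb⟩).and_eventually
    (Ioo_mem_nhdsGT (sub_pos.2 hTb))).exists
  have hTε : T + ε ∈ S := ⟨⟨by linarith [hT.1, hε.1], by linarith [hε.2]⟩, by linarith⟩
  linarith [le_csSup hbdd hTε, hε.1]

lemma AntitoneOn.le_sub_mul_of_forall_frequently_lt {L : ℝ} (hab : a ≤ b)
    (hu : AntitoneOn u (Icc a b))
    (hstep : ∀ c < L, ∀ t ∈ Ico a b, ∃ᶠ ε in 𝓝[>] 0, u (t + ε) < u t - c * ε) :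
    u b ≤ u a - L * (b - a) := by
  have hlim : Tendsto (fun c => u a - c * (b - a)) (𝓝[<] L) (𝓝 (u a - L * (b - a))) :=
    ((continuous_const.sub (continuous_id.mul continuous_const)).tendsto L).mono_left
      nhdsWithin_le_nhds
  exact ge_of_tendsto hlim (eventually_nhdsWithin_of_forall fun c hc =>
    hu.le_sub_mul_of_frequently_lt hab (hstep c hc))

end Dini

lemma toReal_lt_half {a : ℝ≥0∞} (ha : a < 1 / 2) : a.toReal < 1 / 2 := by
  simpa using ENNReal.toReal_strict_mono (by simp) ha

lemma toReal_add_mul_lt_of_ofReal_lt_div {a b : ℝ≥0∞} (hb : b ≠ ∞) {d ε : ℝ} (hd : 0 ≤ d)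
    (hε : 0 < ε) (h : ENNReal.ofReal d < (b - a) / ENNReal.ofReal ε) :
    a.toReal + d * ε < b.toReal := by
  rw [ENNReal.lt_div_iff_mul_lt (by simp [hε]) (by simp), ← ENNReal.ofReal_mul hd,
    lt_tsub_iff_left] at h
  have ha : a ≠ ∞ := ne_top_of_lt (le_self_add.trans_lt h)
  have := ENNReal.toReal_strict_mono hb h
  rwa [ENNReal.toReal_add ha ENNReal.ofReal_ne_top, ENNReal.toReal_ofReal (by positivity)] at this


section Slope

variable {n : ℕ}

/-- Compare `ψ ∘ u = g` with `ε ↦ ψ (u t - c ε)`, whose right derivative `c ψ'(u t)` is smaller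
than the growth rate `d` of `g`; as `ψ` is decreasing, `u` has to fall faster than `c`. -/
lemma eventually_lt_sub_mul_of_psiFn_comp {g u : ℝ → ℝ} {t c : ℝ} (hc : c < 1) (hut : 0 < u t)
    (hgt : psiFn n (u t) = g t)
    (hu : ∀ᶠ ε in 𝓝[>] 0, 0 ≤ u (t + ε) ∧ psiFn n (u (t + ε)) = g (t + ε))
    (hg : ∀ d ∈ Ioo 0 (psiDensity n (u t)), ∀ᶠ ε in 𝓝[>] 0, g t + d * ε < g (t + ε)) :
    ∀ᶠ ε in 𝓝[>] 0, u (t + ε) < u t - c * ε := by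
  have hφ := psiDensity_pos n hut
  obtain ⟨d, hd, hdφ⟩ : ∃ d, max (c * psiDensity n (u t)) 0 < d ∧ d < psiDensity n (u t) :=
    exists_between (max_lt (by nlinarith) hφ)
  have hderiv : HasDerivAt (fun ε => psiFn n (u t - c * ε)) (c * psiDensity n (u t)) 0 := by
    have := (hasDerivAt_psiFn n (u t - c * 0)).comp 0
      (((hasDerivAt_id 0).const_mul c).const_sub (u t))
    simpa [Function.comp_def, mul_comm] using this
  have hcomp : ∀ᶠ ε in 𝓝[>] 0, psiFn n (u t - c * ε) < psiFn n (u t) + d * ε := by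
    filter_upwards [hderiv.hasDerivWithinAt.limsup_slope_le' (by simp)
      ((le_max_left _ _).trans_lt hd), self_mem_nhdsWithin] with ε hε (hε₀ : 0 < ε)
    rw [slope_def_field, sub_zero, mul_zero, sub_zero, div_lt_iff₀ hε₀] at hε
    linarith
  have hnonneg : ∀ᶠ ε in 𝓝[>] 0, 0 ≤ u t - c * ε := by
    have hlim : Tendsto (fun ε => u t - c * ε) (𝓝 0) (𝓝 (u t)) :=
      (show Continuous fun ε : ℝ => u t - c * ε by fun_prop).tendsto' 0 _ (by simp)
    exact (hlim.eventually (lt_mem_nhds hut)).filter_mono nhdsWithin_le_nhds |>.mono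
      fun _ h => h.le
  filter_upwards [hu, hg d ⟨(le_max_right _ _).trans_lt hd, hdφ⟩, hcomp, hnonneg]
    with ε ⟨huε, hψε⟩ hgε hcompε hnonnegε
  by_contra! hle
  have := (strictAntiOn_psiFn n).antitoneOn hnonnegε huε hle
  linarith

end Slope

section NbhdFromIsoperimetry

variable {n : ℕ}

lemma eventually_add_mul_lt_of_lt_bdryMeasure {A : Set (Fin n → ℝ)} {d : ℝ} (hd : 0 ≤ d)
    (hdA : ENNReal.ofReal d < bdryMeasure n A)
    (hfin : ∀ᶠ ε in 𝓝[>] 0, expMeasure n (l1Nbhd n A ε) ≠ ∞) :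
    ∀ᶠ ε in 𝓝[>] 0, (expMeasure n A).toReal + d * ε < (expMeasure n (l1Nbhd n A ε)).toReal := by
  filter_upwards [eventually_lt_of_lt_liminf hdA, hfin, self_mem_nhdsWithin]
    with ε hε hεfin hε₀
  exact toReal_add_mul_lt_of_ofReal_lt_div hεfin hd hε₀ hε

lemma exists_psiFn_comp_eq {g : ℝ → ℝ} {S : Set ℝ} (hg : ∀ t ∈ S, g t ∈ Ioo 0 1) :
    ∃ u : ℝ → ℝ, ∀ t ∈ S, 0 < u t ∧ psiFn n (u t) = g t := by
  have (t : ℝ) : ∃ z, t ∈ S → 0 < z ∧ psiFn n z = g t := by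
    by_cases ht : t ∈ S
    · obtain ⟨z, hz⟩ := exists_pos_psiFn_eq n (hg t ht).1 (hg t ht).2
      exact ⟨z, fun _ => hz⟩
    · exact ⟨0, fun h => absurd h ht⟩
  choose u hu using this
  exact ⟨u, hu⟩

lemma eventually_lt_sub_mul_of_isoperimetricIneq {B : ℝ → Set (Fin n → ℝ)} {u : ℝ → ℝ}
    {h t c : ℝ} (hc : c < 1) (ht : t ∈ Ico 0 h)
    (hnbhd : ∀ ε, 0 < ε → l1Nbhd n (B t) ε = B (t + ε)) (hiso : IsoperimetricIneq n (B t))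
    (hlt : ∀ τ ≤ h, expMeasure n (B τ) < 1 / 2)
    (hu : ∀ τ ∈ Icc 0 h, 0 < u τ ∧ psiFn n (u τ) = (expMeasure n (B τ)).toReal) :
    ∀ᶠ ε in 𝓝[>] 0, u (t + ε) < u t - c * ε := by
  have hsmall : ∀ᶠ ε in 𝓝[>] (0 : ℝ), 0 < ε ∧ t + ε ∈ Icc 0 h := by
    filter_upwards [Ioo_mem_nhdsGT (sub_pos.2 ht.2)] with ε hε
    exact ⟨hε.1, by linarith [ht.1, hε.1], by linarith [hε.2]⟩
  obtain ⟨hut, hψut⟩ := hu t (Ico_subset_Icc_self ht)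
  have hνpos : 0 < expMeasure n (B t) :=
    (ENNReal.toReal_pos_iff.1 (hψut ▸ psiFn_pos n hut.le)).1
  have hbdry := hiso hνpos (hlt t ht.2.le) (u t) hut hψut
  refine eventually_lt_sub_mul_of_psiFn_comp (g := fun τ => (expMeasure n (B τ)).toReal) hc hut
    hψut (hsmall.mono fun ε hε => ⟨(hu _ hε.2).1.le, (hu _ hε.2).2⟩) fun d hd => ?_
  have hfin : ∀ᶠ ε in 𝓝[>] (0 : ℝ), expMeasure n (l1Nbhd n (B t) ε) ≠ ∞ :=
    hsmall.mono fun ε hε => by rw [hnbhd ε hε.1]; exact ne_top_of_lt (hlt _ hε.2.2)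
  filter_upwards [eventually_add_mul_lt_of_lt_bdryMeasure hd.1.le
    (((ENNReal.ofReal_lt_ofReal_iff (psiDensity_pos n hut)).2 hd.2).trans_le hbdry) hfin,
    hsmall] with ε hε hε'
  rwa [hnbhd ε hε'.1] at hε

lemma le_sub_of_isoperimetricIneq_of_l1Nbhd_eq {B : ℝ → Set (Fin n → ℝ)} (hmono : Monotone B)
    (hnbhd : ∀ t, 0 ≤ t → ∀ ε, 0 < ε → l1Nbhd n (B t) ε = B (t + ε))
    (hiso : ∀ t, 0 ≤ t → IsoperimetricIneq n (B t)) {h s s' : ℝ} (hh : 0 < h)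
    (hhalf : expMeasure n (B h) < 1 / 2) (hs : 0 < s) (hs' : 0 < s')
    (hψs : psiFn n s = (expMeasure n (B 0)).toReal)
    (hψs' : psiFn n s' = (expMeasure n (B h)).toReal) : s' ≤ s - h := by
  have hlt (t) (ht : t ≤ h) : expMeasure n (B t) < 1 / 2 :=
    (measure_mono (hmono ht)).trans_lt hhalf
  have hgmono : MonotoneOn (fun t => (expMeasure n (B t)).toReal) (Iic h) :=
    fun a _ b hb hab => ENNReal.toReal_mono (ne_top_of_lt (hlt b hb)) (measure_mono (hmono hab))
  obtain ⟨u, hu⟩ := exists_psiFn_comp_eq (n := n) fun t (ht : t ∈ Icc 0 h) =>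
    ⟨(hψs ▸ psiFn_pos n hs.le).trans_le (hgmono hh.le ht.2 ht.1),
      (toReal_lt_half (hlt t ht.2)).trans (by norm_num)⟩
  have hψ := strictAntiOn_psiFn n
  have h₀ : (0 : ℝ) ∈ Icc 0 h := ⟨le_rfl, hh.le⟩
  have h₁ : h ∈ Icc 0 h := ⟨hh.le, le_rfl⟩
  have hu0 : u 0 = s := hψ.injOn (hu 0 h₀).1.le hs.le ((hu 0 h₀).2.trans hψs.symm)
  have huh : u h = s' := hψ.injOn (hu h h₁).1.le hs'.le ((hu h h₁).2.trans hψs'.symm)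
  have hanti : AntitoneOn u (Icc 0 h) := fun a ha b hb hab =>
    (hψ.le_iff_ge (hu a ha).1.le (hu b hb).1.le).1 <| by
      rw [(hu a ha).2, (hu b hb).2]; exact hgmono ha.2 hb.2 hab
  have := hanti.le_sub_mul_of_forall_frequently_lt hh.le fun c hc t ht =>
    (eventually_lt_sub_mul_of_isoperimetricIneq hc ht (hnbhd t ht.1) (hiso t ht.1) hlt
      hu).frequently
  rw [hu0, huh] at this
  linarith

end NbhdFromIsoperimetry

section IsoperimetryFromNbhd

variable {n : ℕ}

instance : IsLocallyFiniteMeasure (expMeasure n) :=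
  IsLocallyFiniteMeasure.withDensity_ofReal (by fun_prop)

lemma exists_isFiniteUnionOfL1Balls_subset_l1Nbhd {A : Set (Fin n → ℝ)} (hA : MeasurableSet A)
    (hA' : A ⊆ posOrthant n) (hAfin : expMeasure n A ≠ ∞) {a : ℝ≥0∞} (ha : a < expMeasure n A)
    {δ : ℝ} (hδ : 0 < δ) :
    ∃ B, IsFiniteUnionOfL1Balls n B ∧ B ⊆ l1Nbhd n A δ ∧ a < expMeasure n B := by
  obtain ⟨K, hKA, hK, haK⟩ := hA.exists_lt_isCompact_of_ne_top hAfin ha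
  obtain ⟨t, htK, hKt⟩ := hK.elim_nhds_subcover (fun c => {x | ∑ i, |x i - c i| < δ})
    fun c _ => (isOpen_lt (continuous_sum_abs_sub c) continuous_const).mem_nhds (by simpa using hδ)
  refine ⟨⋃ c ∈ t, orthantBall n c δ,
    isFiniteUnionOfL1Balls_biUnion t (fun c hc => hA' (hKA (htK c hc))) hδ,
    iUnion₂_subset fun c hc x hx => ⟨hx.1, c, hKA (htK c hc), hx.2⟩,
    haK.trans_le (measure_mono fun x hx => ?_)⟩
  obtain ⟨c, hc, hxc⟩ := mem_iUnion₂.1 (hKt hx)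
  exact mem_iUnion₂.2 ⟨c, hc, hA' (hKA hx), hxc⟩

/-- `A` is approximated from inside by a finite union `B ⊆ A^δ` of `δ`-balls with
`ψ⁻¹ (ν B) < s₁`, to which the neighbourhood inequality is applied with `h - δ`. -/
lemma psiFn_add_sub_le_of_nbhdIneq (hQ : ∀ B, IsFiniteUnionOfL1Balls n B → NbhdIneq n B)
    {A : Set (Fin n → ℝ)} (hA : MeasurableSet A) (hA' : A ⊆ posOrthant n)
    (hAfin : expMeasure n A ≠ ∞) {s s₁ h δ : ℝ} (hs : 0 < s)
    (hψs : psiFn n s = (expMeasure n A).toReal) (hss₁ : s < s₁) (hδ : 0 < δ) (hδh : δ < h)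
    (hhalf : expMeasure n (l1Nbhd n A h) < 1 / 2) :
    psiFn n (s₁ + δ - h) ≤ (expMeasure n (l1Nbhd n A h)).toReal := by
  have hψ := strictAntiOn_psiFn n
  have hψs₁ : 0 < psiFn n s₁ := psiFn_pos n (by linarith)
  have hlt : ENNReal.ofReal (psiFn n s₁) < expMeasure n A := by
    rw [← ENNReal.ofReal_toReal hAfin, ← hψs, ENNReal.ofReal_lt_ofReal_iff (psiFn_pos n hs.le)]
    exact hψ hs.le (by simp; linarith) hss₁
  obtain ⟨B, hB, hBA, hνB⟩ := exists_isFiniteUnionOfL1Balls_subset_l1Nbhd hA hA' hAfin hlt hδ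
  have hBh : l1Nbhd n B (h - δ) ⊆ l1Nbhd n A h := by
    simpa using (l1Nbhd_mono hBA (h - δ)).trans (l1Nbhd_l1Nbhd_subset A δ (h - δ))
  have hBhalf := (measure_mono hBh).trans_lt hhalf
  have hBB := measure_mono (μ := expMeasure n) (subset_l1Nbhd hB.subset_posOrthant (sub_pos.2 hδh))
  have hv₀ : psiFn n s₁ < (expMeasure n B).toReal :=
    (ENNReal.ofReal_lt_iff_lt_toReal hψs₁.le (ne_top_of_le_ne_top (ne_top_of_lt hBhalf) hBB)).1
      hνB
  have hv₁ := ENNReal.toReal_mono (ne_top_of_lt hBhalf) hBB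
  have hv₂ := toReal_lt_half hBhalf
  obtain ⟨sB, hsB, hψsB⟩ := exists_pos_psiFn_eq n (hψs₁.trans hv₀) (by linarith)
  obtain ⟨s₂, hs₂, hψs₂⟩ := exists_pos_psiFn_eq n (hψs₁.trans (hv₀.trans_le hv₁)) (by linarith)
  have hQB := hQ B hB (h - δ) (sub_pos.2 hδh) hBhalf sB s₂ hsB hs₂ hψsB hψs₂
  have hsBs₁ : sB < s₁ := (hψ.lt_iff_gt (by simp; linarith) hsB.le).1 (hψsB ▸ hv₀)
  calc psiFn n (s₁ + δ - h) ≤ psiFn n s₂ :=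
        (hψ.le_iff_ge (by simp; linarith) hs₂.le).2 (by linarith)
    _ ≤ (expMeasure n (l1Nbhd n A h)).toReal :=
        hψs₂ ▸ ENNReal.toReal_mono (ne_top_of_lt hhalf) (measure_mono hBh)

lemma ofReal_psiFn_sub_le_of_nbhdIneq (hQ : ∀ B, IsFiniteUnionOfL1Balls n B → NbhdIneq n B)
    {A : Set (Fin n → ℝ)} (hA : MeasurableSet A) (hA' : A ⊆ posOrthant n)
    (hAfin : expMeasure n A ≠ ∞) {s h : ℝ} (hs : 0 < s)
    (hψs : psiFn n s = (expMeasure n A).toReal) (hh : 0 < h) (hψh : psiFn n (s - h) < 1 / 2) :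
    ENNReal.ofReal (psiFn n (s - h)) ≤ expMeasure n (l1Nbhd n A h) := by
  rcases lt_or_ge (expMeasure n (l1Nbhd n A h)) (1 / 2) with hhalf | hhalf
  · rw [ENNReal.ofReal_le_iff_le_toReal (ne_top_of_lt hhalf)]
    have hlim : Tendsto (fun η => psiFn n (s + η + η - h)) (𝓝[>] 0) (𝓝 (psiFn n (s - h))) :=
      (((continuous_psiFn n).comp (by fun_prop : Continuous fun η => s + η + η - h)).tendsto' 0 _
        (by simp)).mono_left nhdsWithin_le_nhds
    refine le_of_tendsto hlim ?_
    filter_upwards [Ioo_mem_nhdsGT hh] with η hη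
    exact psiFn_add_sub_le_of_nbhdIneq hQ hA hA' hAfin hs hψs (by linarith [hη.1]) hη.1 hη.2
      hhalf
  · exact le_trans (by simpa using ENNReal.ofReal_le_ofReal hψh.le) hhalf

end IsoperimetryFromNbhd

section Equivalence

variable {n : ℕ}

lemma isoperimetricIneq_of_nbhdIneq (hQ : ∀ B, IsFiniteUnionOfL1Balls n B → NbhdIneq n B)
    {A : Set (Fin n → ℝ)} (hA : MeasurableSet A) (hA' : A ⊆ posOrthant n) :
    IsoperimetricIneq n A := by
  intro _ hAhalf s hs hψs
  have hAfin := ne_top_of_lt hAhalf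
  have hνA : expMeasure n A = ENNReal.ofReal (psiFn n s) := by
    rw [hψs, ENNReal.ofReal_toReal hAfin]
  have hderiv : Tendsto (fun h => (psiFn n (s - h) - psiFn n s) / h) (𝓝[>] 0)
      (𝓝 (psiDensity n s)) := by
    have := ((hasDerivAt_psiFn n (s - 0)).comp_const_sub s 0).tendsto_slope_zero_right
    simpa [div_eq_inv_mul] using this
  have hnear : ∀ᶠ h in 𝓝[>] 0, psiFn n (s - h) < 1 / 2 := by
    refine ((continuous_psiFn n).comp (continuous_const.sub continuous_id)).continuousAt
      |>.eventually_lt continuousAt_const ?_ |>.filter_mono nhdsWithin_le_nhds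
    simpa [hψs] using toReal_lt_half hAhalf
  have hle : ∀ᶠ h in 𝓝[>] 0, ENNReal.ofReal ((psiFn n (s - h) - psiFn n s) / h) ≤
      (expMeasure n (l1Nbhd n A h) - expMeasure n A) / ENNReal.ofReal h := by
    filter_upwards [hnear, self_mem_nhdsWithin] with h hψh (hh : 0 < h)
    rw [ENNReal.ofReal_div_of_pos hh, ENNReal.ofReal_sub _ (psiFn_pos n hs.le).le, ← hνA]
    exact ENNReal.div_le_div_right (tsub_le_tsub_right
      (ofReal_psiFn_sub_le_of_nbhdIneq hQ hA hA' hAfin hs hψs hh hψh) _) _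
  calc ENNReal.ofReal (psiDensity n s)
      = liminf (fun h => ENNReal.ofReal ((psiFn n (s - h) - psiFn n s) / h)) (𝓝[>] 0) :=
        ((ENNReal.continuous_ofReal.tendsto _).comp hderiv).liminf_eq.symm
    _ ≤ bdryMeasure n A := liminf_le_liminf hle

lemma nbhdIneq_of_isoperimetricIneq
    (hR : ∀ A, IsFiniteUnionOfL1Balls n A → IsoperimetricIneq n A) {B : Set (Fin n → ℝ)}
    (hB : IsFiniteUnionOfL1Balls n B) : NbhdIneq n B := by
  obtain ⟨m, c, r, hcr, rfl⟩ := hB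
  set Bt : ℝ → Set (Fin n → ℝ) := fun t => ⋃ j, orthantBall n (c j) (r j + t)
  have hBt0 : (⋃ j, {x | x ∈ posOrthant n ∧ ∑ i, |x i - c j i| < r j}) = Bt 0 := by
    simp only [Bt, add_zero]; rfl
  have hnbhd (t) (ht : 0 ≤ t) (ε) (hε : 0 < ε) : l1Nbhd n (Bt t) ε = Bt (t + ε) := by
    simp only [Bt, ← add_assoc]
    exact l1Nbhd_iUnion_orthantBall (fun j => (hcr j).1) (fun j => by linarith [(hcr j).2]) hε
  intro h hh hhalf s s' hs hs' hψs hψs'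
  rw [hBt0, hnbhd 0 le_rfl h hh, zero_add] at hhalf hψs'
  rw [hBt0] at hψs
  have hmono : Monotone Bt := fun t t' htt' =>
    iUnion_mono fun j => orthantBall_mono _ (by linarith)
  have hiso (t) (ht : 0 ≤ t) : IsoperimetricIneq n (Bt t) :=
    hR _ ⟨m, c, fun j => r j + t, fun j => ⟨(hcr j).1, by linarith [(hcr j).2]⟩, rfl⟩
  exact le_sub_of_isoperimetricIneq_of_l1Nbhd_eq (B := Bt) hmono hnbhd hiso hh hhalf hs hs' hψs
    hψs'

end Equivalence

theorem isoperimetry_iff_nbhd_small_general (n : ℕ) :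
    ((∀ A : Set (Fin n → ℝ), MeasurableSet A → A ⊆ posOrthant n →
        0 < expMeasure n A → expMeasure n A < (1 : ℝ≥0∞) / 2 →
        ∀ s : ℝ, 0 < s → psiFn n s = (expMeasure n A).toReal →
          ENNReal.ofReal (s ^ (n - 1) * Real.exp (-s) / (Nat.factorial (n - 1) : ℝ))
            ≤ bdryMeasure n A)
      ↔
      (∀ B : Set (Fin n → ℝ), IsFiniteUnionOfL1Balls n B →
        ∀ h : ℝ, 0 < h → expMeasure n (l1Nbhd n B h) < (1 : ℝ≥0∞) / 2 →
        ∀ s s' : ℝ, 0 < s → 0 < s' →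
          psiFn n s = (expMeasure n B).toReal →
          psiFn n s' = (expMeasure n (l1Nbhd n B h)).toReal →
          s' ≤ s - h))
    ∧
    ((∀ B : Set (Fin n → ℝ), IsFiniteUnionOfL1Balls n B →
        ∀ h : ℝ, 0 < h → expMeasure n (l1Nbhd n B h) < (1 : ℝ≥0∞) / 2 →
        ∀ s s' : ℝ, 0 < s → 0 < s' →
          psiFn n s = (expMeasure n B).toReal →
          psiFn n s' = (expMeasure n (l1Nbhd n B h)).toReal →
          s' ≤ s - h)
      ↔
      (∀ A : Set (Fin n → ℝ), IsFiniteUnionOfL1Balls n A →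
        0 < expMeasure n A → expMeasure n A < (1 : ℝ≥0∞) / 2 →
        ∀ s : ℝ, 0 < s → psiFn n s = (expMeasure n A).toReal →
          ENNReal.ofReal (s ^ (n - 1) * Real.exp (-s) / (Nat.factorial (n - 1) : ℝ))
            ≤ bdryMeasure n A)) := by
  have hPR (hP : ∀ A, MeasurableSet A → A ⊆ posOrthant n → IsoperimetricIneq n A) :
      ∀ A, IsFiniteUnionOfL1Balls n A → IsoperimetricIneq n A :=
    fun A hA => hP A hA.measurableSet hA.subset_posOrthant
  have hRQ (hR : ∀ A, IsFiniteUnionOfL1Balls n A → IsoperimetricIneq n A) :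
      ∀ B, IsFiniteUnionOfL1Balls n B → NbhdIneq n B :=
    fun _ => nbhdIneq_of_isoperimetricIneq hR
  have hQP (hQ : ∀ B, IsFiniteUnionOfL1Balls n B → NbhdIneq n B) :
      ∀ A, MeasurableSet A → A ⊆ posOrthant n → IsoperimetricIneq n A :=
    fun _ => isoperimetricIneq_of_nbhdIneq hQ
  exact ⟨⟨fun hP => hRQ (hPR hP), hQP⟩, fun hQ => hPR (hQP hQ), hRQ⟩

/-- The isoperimetric inequality for sets of measure less than `1/2` is equivalent to the
neighbourhood inequality `ψ⁻¹(ν(B^h)) ≤ ψ⁻¹(ν(B)) − h` for finite unions of `ℓ₁`-balls,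
which in turn is equivalent to the isoperimetric inequality restricted to finite unions
of `ℓ₁`-balls. -/
theorem isoperimetry_iff_nbhd_small (n : ℕ) (hn : 1 ≤ n) :
    ((∀ A : Set (Fin n → ℝ), MeasurableSet A → A ⊆ posOrthant n →
        0 < expMeasure n A → expMeasure n A < (1 : ℝ≥0∞) / 2 →
        ∀ s : ℝ, 0 < s → psiFn n s = (expMeasure n A).toReal →
          ENNReal.ofReal (s ^ (n - 1) * Real.exp (-s) / (Nat.factorial (n - 1) : ℝ))
            ≤ bdryMeasure n A)
      ↔
      (∀ B : Set (Fin n → ℝ), IsFiniteUnionOfL1Balls n B →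
        ∀ h : ℝ, 0 < h → expMeasure n (l1Nbhd n B h) < (1 : ℝ≥0∞) / 2 →
        ∀ s s' : ℝ, 0 < s → 0 < s' →
          psiFn n s = (expMeasure n B).toReal →
          psiFn n s' = (expMeasure n (l1Nbhd n B h)).toReal →
          s' ≤ s - h))
    ∧
    ((∀ B : Set (Fin n → ℝ), IsFiniteUnionOfL1Balls n B →
        ∀ h : ℝ, 0 < h → expMeasure n (l1Nbhd n B h) < (1 : ℝ≥0∞) / 2 →
        ∀ s s' : ℝ, 0 < s → 0 < s' →
          psiFn n s = (expMeasure n B).toReal →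
          psiFn n s' = (expMeasure n (l1Nbhd n B h)).toReal →
          s' ≤ s - h)
      ↔
      (∀ A : Set (Fin n → ℝ), IsFiniteUnionOfL1Balls n A →
        0 < expMeasure n A → expMeasure n A < (1 : ℝ≥0∞) / 2 →
        ∀ s : ℝ, 0 < s → psiFn n s = (expMeasure n A).toReal →
          ENNReal.ofReal (s ^ (n - 1) * Real.exp (-s) / (Nat.factorial (n - 1) : ℝ))
            ≤ bdryMeasure n A)) :=
  isoperimetry_iff_nbhd_small_general n
end

section
/- Let n ≥ 1 be an integer and let x, y ≥ 0 be real numbers satisfying ∫₀ˣ e^{-t} t^{n−1} dt = ∫_y^∞ e^{-t} t^{n−1} dt ≤ (1/2)·∫₀^∞ e^{-t} t^{n−1} dt = (n−1)!/2. Then e^{-x} x^{n−1} ≥ e^{-y} y^{n−1}. (In isoperimetric terms: when the simplex and the complement of a simplex have the same measure, at most 1/2, the complement has the smaller or equal boundary measure.) -/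
/-!
Write `m = n - 1`, `f t = e^{-t} t^m` and `G t = ∫_t^∞ f = e^{-t} ∑_{k ≤ m} m!/k! t^k`, so that the
hypotheses read `G x + G y = m!` and `2 G y ≤ m!`; in particular `x ≤ y`. As `f` decreases past its
mode `m`, only `x < m` needs an argument.

Points `a < b` with `f a = f b` are parametrized by `w = log (b / a)` as `a = m w / (e^w - 1)`,
`b = a + m w`. Along this curve `G a + G b` has derivative `-f a · (a' + b')`, and `a' + b' ≥ 0`
amounts to `sinh w ≥ w`; so `G a + G b` decreases in `w`, and its limit `m!` at `w → ∞` bounds it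
from below. Its limit at `w → 0⁺` gives `2 G m ≥ m!`: the median lies above the mode.

If `f x < f y`, then either `y ≤ m`, and `G x > G y ≥ G m ≥ m!/2`, or `y > m` has a partner
`a ∈ (x, m]` with `f a = f y`, and `G x + G y > G a + G y ≥ m!`.
-/

open MeasureTheory Real Set Filter Topology
open scoped Nat

noncomputable def upperGamma : ℕ → ℝ → ℝ
  | 0, t => exp (-t)
  | m + 1, t => exp (-t) * t ^ (m + 1) + (m + 1) * upperGamma m t

theorem hasDerivAt_exp_neg_mul_pow (m : ℕ) (t : ℝ) :
    HasDerivAt (fun s ↦ exp (-s) * s ^ m) (exp (-t) * (m * t ^ (m - 1) - t ^ m)) t :=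
  ((hasDerivAt_neg t).exp.mul (hasDerivAt_pow m t)).congr_deriv (by ring)

theorem hasDerivAt_upperGamma (m : ℕ) (t : ℝ) :
    HasDerivAt (upperGamma m) (-(exp (-t) * t ^ m)) t := by
  induction m with
  | zero => simpa [upperGamma] using (hasDerivAt_neg t).exp
  | succ m ih =>
    refine ((hasDerivAt_exp_neg_mul_pow (m + 1) t).add
      (ih.const_mul ((m : ℝ) + 1))).congr_deriv ?_
    rw [Nat.add_sub_cancel]; push_cast; ring

theorem upperGamma_apply_zero (m : ℕ) : upperGamma m 0 = m ! := by
  induction m with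
  | zero => simp [upperGamma]
  | succ m ih => simp [upperGamma, ih, Nat.factorial_succ]

theorem tendsto_upperGamma_atTop (m : ℕ) : Tendsto (upperGamma m) atTop (𝓝 0) := by
  induction m with
  | zero => exact tendsto_exp_neg_atTop_nhds_zero
  | succ m ih =>
    simpa [upperGamma, mul_comm] using
      (tendsto_pow_mul_exp_neg_atTop_nhds_zero (m + 1)).add (ih.const_mul ((m : ℝ) + 1))

theorem intervalIntegral_exp_neg_mul_pow (m : ℕ) (x : ℝ) :
    ∫ t in (0 : ℝ)..x, exp (-t) * t ^ m = (m ! : ℝ) - upperGamma m x := by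
  rw [intervalIntegral.integral_eq_sub_of_hasDerivAt (f := fun t ↦ -upperGamma m t)
    (fun t _ ↦ (hasDerivAt_upperGamma m t).neg.congr_deriv (neg_neg _))
    ((by fun_prop : Continuous _).intervalIntegrable _ _), upperGamma_apply_zero]
  ring

theorem integral_Ioi_exp_neg_mul_pow (m : ℕ) {y : ℝ} (hy : 0 ≤ y) :
    ∫ t in Ioi y, exp (-t) * t ^ m = upperGamma m y := by
  rw [integral_Ioi_of_hasDerivAt_of_nonneg' (g := fun t ↦ -upperGamma m t)
    (fun t _ ↦ (hasDerivAt_upperGamma m t).neg.congr_deriv (neg_neg _))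
    (fun t ht ↦ by have := hy.trans (le_of_lt ht); positivity)
    (by simpa using (tendsto_upperGamma_atTop m).neg)]
  simp

theorem strictAntiOn_upperGamma (m : ℕ) : StrictAntiOn (upperGamma m) (Ici 0) := by
  refine strictAntiOn_of_hasDerivWithinAt_neg (convex_Ici 0)
    (fun t _ ↦ (hasDerivAt_upperGamma m t).continuousAt.continuousWithinAt)
    (fun t _ ↦ (hasDerivAt_upperGamma m t).hasDerivWithinAt) fun t ht ↦ ?_
  rw [interior_Ici] at ht
  have : 0 < t := ht
  simp only [neg_lt_zero]; positivity

theorem antitoneOn_exp_neg_mul_pow (m : ℕ) :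
    AntitoneOn (fun t ↦ exp (-t) * t ^ m) (Ici (m : ℝ)) := by
  refine antitoneOn_of_hasDerivWithinAt_nonpos (convex_Ici _)
    (by fun_prop) (fun t _ ↦ (hasDerivAt_exp_neg_mul_pow m t).hasDerivWithinAt) fun t ht ↦ ?_
  rw [interior_Ici] at ht
  have ht : (m : ℝ) < t := ht
  have ht0 : 0 < t := (Nat.cast_nonneg m).trans_lt ht
  refine mul_nonpos_of_nonneg_of_nonpos (exp_pos _).le (sub_nonpos.2 ?_)
  rcases Nat.eq_zero_or_pos m with rfl | hm
  · simp
  · calc (m : ℝ) * t ^ (m - 1) ≤ t * t ^ (m - 1) := by gcongr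
      _ = t ^ m := mul_pow_sub_one hm.ne' t

/-- For `w > 0`, `pairLeft m w < pairRight m w` are the two points with ratio `e^w` at which
`e^{-t} t^m` takes the same value. -/
noncomputable def pairLeft (m : ℕ) (w : ℝ) : ℝ := m * w / (exp w - 1)

noncomputable def pairRight (m : ℕ) (w : ℝ) : ℝ := pairLeft m w + m * w

theorem pairRight_eq_pairLeft_mul_exp (m : ℕ) {w : ℝ} (hw : w ≠ 0) :
    pairRight m w = pairLeft m w * exp w := by
  have : exp w - 1 ≠ 0 := by simpa [sub_eq_zero] using hw
  unfold pairRight pairLeft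
  field_simp
  ring

theorem exp_neg_mul_pow_pairLeft_eq (m : ℕ) {w : ℝ} (hw : w ≠ 0) :
    exp (-pairLeft m w) * pairLeft m w ^ m = exp (-pairRight m w) * pairRight m w ^ m := by
  have hexp : exp (-pairRight m w) = exp (-pairLeft m w) * (exp (m * w))⁻¹ := by
    rw [pairRight, neg_add, exp_add, exp_neg (m * w)]
  rw [hexp, pairRight_eq_pairLeft_mul_exp m hw, mul_pow, ← exp_nat_mul]
  field_simp

theorem pairLeft_nonneg (m : ℕ) {w : ℝ} (hw : 0 ≤ w) : 0 ≤ pairLeft m w :=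
  div_nonneg (by positivity) (sub_nonneg.2 (one_le_exp hw))

theorem hasDerivAt_pairLeft (m : ℕ) {w : ℝ} (hw : w ≠ 0) :
    HasDerivAt (pairLeft m) (m * (exp w - 1 - w * exp w) / (exp w - 1) ^ 2) w := by
  have : exp w - 1 ≠ 0 := by simpa [sub_eq_zero] using hw
  refine (((hasDerivAt_id w).const_mul (m : ℝ)).div ((hasDerivAt_exp w).sub_const 1)
    this).congr_deriv ?_
  simp only [id]; ring

theorem two_mul_mul_exp_le_exp_sq_sub_one {w : ℝ} (hw : 0 ≤ w) :
    2 * w * exp w ≤ exp w ^ 2 - 1 := by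
  have h := self_le_sinh_iff.2 hw
  rw [sinh_eq, exp_neg] at h
  have := exp_pos w
  field_simp at h
  nlinarith

theorem tendsto_div_exp_sub_one_nhdsNE_zero :
    Tendsto (fun w ↦ w / (exp w - 1)) (𝓝[≠] 0) (𝓝 1) := by
  have h := hasDerivAt_iff_tendsto_slope_zero.1 (hasDerivAt_exp 0)
  simpa [div_eq_mul_inv, mul_comm] using h.inv₀ (by simp)

noncomputable def pairTailSum (m : ℕ) (w : ℝ) : ℝ :=
  upperGamma m (pairLeft m w) + upperGamma m (pairRight m w)

theorem hasDerivAt_pairTailSum (m : ℕ) {w : ℝ} (hw : w ≠ 0) :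
    HasDerivAt (pairTailSum m) (-(exp (-pairLeft m w) * pairLeft m w ^ m) *
      (2 * (m * (exp w - 1 - w * exp w) / (exp w - 1) ^ 2) + m)) w := by
  have hA := hasDerivAt_pairLeft m hw
  have hB : HasDerivAt (pairRight m) _ w := hA.add ((hasDerivAt_id w).const_mul (m : ℝ))
  refine ((hasDerivAt_upperGamma m _).comp w hA |>.add
    ((hasDerivAt_upperGamma m _).comp w hB)).congr_deriv ?_
  rw [← exp_neg_mul_pow_pairLeft_eq m hw]
  ring

theorem two_mul_deriv_pairLeft_add_nonneg (m : ℕ) {w : ℝ} (hw : 0 < w) :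
    0 ≤ 2 * (m * (exp w - 1 - w * exp w) / (exp w - 1) ^ 2) + m := by
  have he : exp w - 1 ≠ 0 := by simpa [sub_eq_zero] using hw.ne'
  have hsinh := two_mul_mul_exp_le_exp_sq_sub_one hw.le
  calc (0 : ℝ) ≤ m * (exp w ^ 2 - 1 - 2 * w * exp w) / (exp w - 1) ^ 2 := by
        have := sub_nonneg.2 hsinh
        positivity
    _ = _ := by field_simp; ring

theorem antitoneOn_pairTailSum (m : ℕ) : AntitoneOn (pairTailSum m) (Ioi 0) := by
  refine antitoneOn_of_hasDerivWithinAt_nonpos (convex_Ioi 0)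
    (fun w hw ↦ (hasDerivAt_pairTailSum m (ne_of_gt hw)).continuousAt.continuousWithinAt)
    (fun w hw ↦ (hasDerivAt_pairTailSum m (ne_of_gt (interior_subset hw))).hasDerivWithinAt)
    fun w hw ↦ ?_
  have hw : 0 < w := interior_subset hw
  have := pairLeft_nonneg m hw.le
  exact mul_nonpos_of_nonpos_of_nonneg (neg_nonpos.2 (by positivity))
    (two_mul_deriv_pairLeft_add_nonneg m hw)

theorem tendsto_pairTailSum_atTop {m : ℕ} (hm : 0 < m) :
    Tendsto (pairTailSum m) atTop (𝓝 (m ! : ℝ)) := by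
  have hA : Tendsto (pairLeft m) atTop (𝓝 0) := by
    have h := (tendsto_div_pow_mul_exp_add_atTop 1 (-1) 1 one_ne_zero.symm).const_mul (m : ℝ)
    rw [mul_zero] at h
    refine h.congr fun w ↦ ?_
    simp [pairLeft, mul_div_assoc, sub_eq_add_neg]
  have hB : Tendsto (pairRight m) atTop atTop :=
    hA.add_atTop (tendsto_id.const_mul_atTop (by exact_mod_cast hm))
  have h := ((hasDerivAt_upperGamma m 0).continuousAt.tendsto.comp hA).add
    ((tendsto_upperGamma_atTop m).comp hB)
  rwa [upperGamma_apply_zero, add_zero] at h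

theorem factorial_le_pairTailSum {m : ℕ} (hm : 0 < m) {w : ℝ} (hw : 0 < w) :
    (m ! : ℝ) ≤ pairTailSum m w :=
  le_of_tendsto (tendsto_pairTailSum_atTop hm) <| (eventually_ge_atTop w).mono
    fun _ hv ↦ antitoneOn_pairTailSum m hw (hw.trans_le hv) hv

theorem tendsto_pairTailSum_nhdsGT_zero (m : ℕ) :
    Tendsto (pairTailSum m) (𝓝[>] 0) (𝓝 (2 * upperGamma m m)) := by
  have hA : Tendsto (pairLeft m) (𝓝[>] 0) (𝓝 m) := by
    have h := (tendsto_div_exp_sub_one_nhdsNE_zero.mono_left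
      (nhdsWithin_mono 0 fun w hw ↦ ne_of_gt hw)).const_mul (m : ℝ)
    rw [mul_one] at h
    exact h.congr fun w ↦ (mul_div_assoc _ _ _).symm
  have hB : Tendsto (pairRight m) (𝓝[>] 0) (𝓝 m) := by
    have h := hA.add (((continuous_const_mul (m : ℝ)).tendsto 0).mono_left nhdsWithin_le_nhds)
    rwa [mul_zero, add_zero] at h
  have hc := (hasDerivAt_upperGamma m m).continuousAt.tendsto
  rw [two_mul]
  exact (hc.comp hA).add (hc.comp hB)

theorem factorial_le_two_mul_upperGamma_self {m : ℕ} (hm : 0 < m) :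
    (m ! : ℝ) ≤ 2 * upperGamma m m :=
  ge_of_tendsto (tendsto_pairTailSum_nhdsGT_zero m) <|
    eventually_mem_nhdsWithin.mono fun _ hw ↦ factorial_le_pairTailSum hm hw

theorem factorial_le_upperGamma_add_of_eq {m : ℕ} {a b : ℝ} (ha : 0 < a) (hab : a < b)
    (hf : exp (-a) * a ^ m = exp (-b) * b ^ m) :
    (m ! : ℝ) ≤ upperGamma m a + upperGamma m b := by
  have hb : 0 < b := ha.trans hab
  set w := log (b / a)
  have hw : 0 < w := log_pos ((one_lt_div ha).2 hab)
  have hexp : exp w = b / a := exp_log (by positivity)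
  have hgap : b - a = m * w := by
    have := congrArg log hf
    rw [log_mul (exp_pos _).ne' (by positivity), log_mul (exp_pos _).ne' (by positivity),
      log_exp, log_exp, log_pow, log_pow] at this
    rw [show w = log b - log a from log_div hb.ne' ha.ne']
    linarith
  have hm : 0 < m := by
    by_contra! h
    rw [Nat.le_zero.1 h, Nat.cast_zero, zero_mul, sub_eq_zero] at hgap
    exact hab.ne' hgap
  have hleft : pairLeft m w = a := by
    have : b - a ≠ 0 := sub_ne_zero.2 hab.ne'
    rw [pairLeft, ← hgap, hexp]
    field_simp
  have hright : pairRight m w = b := by rw [pairRight, hleft, ← hgap]; ring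
  simpa [pairTailSum, hleft, hright] using factorial_le_pairTailSum hm hw

theorem exp_neg_mul_pow_le_of_upperGamma_add_eq_factorial {m : ℕ} {x y : ℝ} (hx : 0 ≤ x)
    (hy : 0 ≤ y) (hsum : upperGamma m x + upperGamma m y = m !)
    (hy2 : 2 * upperGamma m y ≤ m !) :
    exp (-y) * y ^ m ≤ exp (-x) * x ^ m := by
  have hxy : x ≤ y := ((strictAntiOn_upperGamma m).le_iff_ge hy hx).1 (by linarith)
  by_contra! hlt
  have hxm : x < m := by
    by_contra! h
    exact hlt.not_ge (antitoneOn_exp_neg_mul_pow m h (h.trans hxy) hxy)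
  have hm : 0 < m := by exact_mod_cast hx.trans_lt hxm
  have hxy' : x < y := hxy.lt_of_ne (by rintro rfl; exact lt_irrefl _ hlt)
  have hGxy := strictAntiOn_upperGamma m hx hy hxy'
  rcases le_or_gt y m with hym | hmy
  · have := (strictAntiOn_upperGamma m).antitoneOn hy (mem_Ici.2 (Nat.cast_nonneg m)) hym
    have := factorial_le_two_mul_upperGamma_self hm
    linarith
  · obtain ⟨a, ⟨hxa, ham⟩, hfa⟩ := intermediate_value_Icc hxm.le (by fun_prop : Continuous
      fun t ↦ exp (-t) * t ^ m).continuousOn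
      ⟨hlt.le, antitoneOn_exp_neg_mul_pow m self_mem_Ici hmy.le hmy.le⟩
    have hxa' : x < a := hxa.lt_of_ne (by rintro rfl; exact hlt.ne hfa)
    have := factorial_le_upperGamma_add_of_eq (hx.trans_lt hxa') (ham.trans_lt hmy) hfa
    have := strictAntiOn_upperGamma m hx (hx.trans hxa) hxa'
    linarith

theorem simplex_vs_complement_boundary_general (n : ℕ) (x y : ℝ)
    (hx : 0 ≤ x) (hy : 0 ≤ y)
    (heq : ∫ t in (0:ℝ)..x, Real.exp (-t) * t ^ (n - 1)
      = ∫ t in Set.Ioi y, Real.exp (-t) * t ^ (n - 1))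
    (hle : ∫ t in Set.Ioi y, Real.exp (-t) * t ^ (n - 1)
      ≤ (Nat.factorial (n - 1) : ℝ) / 2) :
    Real.exp (-y) * y ^ (n - 1) ≤ Real.exp (-x) * x ^ (n - 1) := by
  rw [intervalIntegral_exp_neg_mul_pow, integral_Ioi_exp_neg_mul_pow _ hy] at heq
  rw [integral_Ioi_exp_neg_mul_pow _ hy] at hle
  exact exp_neg_mul_pow_le_of_upperGamma_add_eq_factorial hx hy (by linarith) (by linarith)

/-- If `∫₀ˣ e^{-t} t^{n−1} dt = ∫_y^∞ e^{-t} t^{n−1} dt ≤ (n−1)!/2` with `x, y ≥ 0`, then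
`e^{-x} x^{n−1} ≥ e^{-y} y^{n−1}`. -/
theorem simplex_vs_complement_boundary (n : ℕ) (hn : 1 ≤ n) (x y : ℝ)
    (hx : 0 ≤ x) (hy : 0 ≤ y)
    (heq : ∫ t in (0:ℝ)..x, Real.exp (-t) * t ^ (n - 1)
      = ∫ t in Set.Ioi y, Real.exp (-t) * t ^ (n - 1))
    (hle : ∫ t in Set.Ioi y, Real.exp (-t) * t ^ (n - 1)
      ≤ (Nat.factorial (n - 1) : ℝ) / 2) :
    Real.exp (-y) * y ^ (n - 1) ≤ Real.exp (-x) * x ^ (n - 1) :=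
  simplex_vs_complement_boundary_general n x y hx hy heq hle
end

section
/- For every integer n ≥ 1, ∫_{n−1}^∞ e^{-t} t^{n−1} dt ≥ (1/2)·(n−1)!. Equivalently, a Poisson random variable with integer parameter k = n−1 satisfies P(Poisson(k) ≤ k) = e^{-k}·Σ_{j=0}^{k} k^j/j! ≥ 1/2. -/
/-!
The Gamma density `f t = e^{-t} t^k / k!` of total mass `1` is lopsided about its mode `k`:
`f (k - u) ≤ f (k + u)` for `0 ≤ u ≤ k`, which after the substitution `u = k x` is
`(1 - x) e^x ≤ (1 + x) e^{-x}`, i.e. `2x ≤ log ((1 + x) / (1 - x))`. Reflecting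
`[0, k]` about `k` thus gives `∫_0^k f ≤ ∫_k^{2k} f ≤ ∫_k^∞ f`, so `∫_k^∞ f ≥ 1/2`.
Integrating `d/dt (e^{-t} ∑_{j ≤ k} t^j / j!) = -f t` identifies `∫_k^∞ f` with the Poisson sum.
-/

open MeasureTheory Real Set Filter Topology
open scoped Nat

noncomputable def expPartialSum (n : ℕ) (x : ℝ) : ℝ :=
  ∑ j ∈ Finset.range n, x ^ j / j !

lemma expPartialSum_succ (n : ℕ) (x : ℝ) :
    expPartialSum (n + 1) x = expPartialSum n x + x ^ n / n ! :=
  Finset.sum_range_succ _ _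

lemma expPartialSum_succ_zero (n : ℕ) : expPartialSum (n + 1) 0 = 1 := by
  simp [expPartialSum, Finset.sum_range_succ']

lemma hasDerivAt_expPartialSum_succ (n : ℕ) (x : ℝ) :
    HasDerivAt (expPartialSum (n + 1)) (expPartialSum n x) x := by
  induction n with
  | zero =>
    unfold expPartialSum
    simpa using hasDerivAt_const x (1 : ℝ)
  | succ n ih =>
    have hpow : HasDerivAt (fun y : ℝ => y ^ (n + 1) / ((n + 1)! : ℝ)) (x ^ n / n !) x := by
      refine ((hasDerivAt_pow (n + 1) x).div_const ((n + 1)! : ℝ)).congr_deriv ?_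
      rw [Nat.factorial_succ]; push_cast; field_simp
    rw [expPartialSum_succ, show expPartialSum (n + 1 + 1) =
      fun y => expPartialSum (n + 1) y + y ^ (n + 1) / (n + 1)! from
        funext (expPartialSum_succ _)]
    exact ih.add hpow

lemma hasDerivAt_exp_neg_mul_expPartialSum (k : ℕ) (x : ℝ) :
    HasDerivAt (fun y => exp (-y) * expPartialSum (k + 1) y) (-(exp (-x) * x ^ k / k !)) x := by
  have he : HasDerivAt (fun y => exp (-y)) (-exp (-x)) x := by
    simpa using (hasDerivAt_neg x).exp
  refine (he.mul (hasDerivAt_expPartialSum_succ k x)).congr_deriv ?_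
  rw [expPartialSum_succ]; ring

lemma tendsto_exp_neg_mul_expPartialSum (n : ℕ) :
    Tendsto (fun x => exp (-x) * expPartialSum n x) atTop (𝓝 0) := by
  simp only [expPartialSum, Finset.mul_sum]
  simpa using tendsto_finsetSum (Finset.range n) fun j _ =>
    ((tendsto_pow_mul_exp_neg_atTop_nhds_zero j).div_const (j ! : ℝ)).congr
      fun x => by ring

section PoissonCDF

variable (k : ℕ) {a : ℝ} (ha : 0 ≤ a)
include ha

lemma integrableOn_Ioi_exp_neg_mul_pow_div_factorial :
    IntegrableOn (fun t => exp (-t) * t ^ k / k !) (Ioi a) :=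
  integrableOn_Ioi_deriv_of_nonneg' (l := 0)
    (g := fun x => -(exp (-x) * expPartialSum (k + 1) x))
    (fun x _ => by simpa using (hasDerivAt_exp_neg_mul_expPartialSum k x).fun_neg)
    (fun x hx => by have : 0 ≤ x := ha.trans hx.out.le; positivity)
    (by simpa using (tendsto_exp_neg_mul_expPartialSum (k + 1)).neg)

lemma integral_Ioi_exp_neg_mul_pow_div_factorial :
    ∫ t in Ioi a, exp (-t) * t ^ k / k ! = exp (-a) * expPartialSum (k + 1) a := by
  simpa using integral_Ioi_of_hasDerivAt_of_nonneg' (l := 0)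
    (g := fun x => -(exp (-x) * expPartialSum (k + 1) x))
    (fun x _ => by simpa using (hasDerivAt_exp_neg_mul_expPartialSum k x).fun_neg)
    (fun x hx => by have : 0 ≤ x := ha.trans hx.out.le; positivity)
    (by simpa using (tendsto_exp_neg_mul_expPartialSum (k + 1)).neg)

end PoissonCDF

lemma one_sub_mul_exp_le_one_add_mul_exp_neg {x : ℝ} (hx : 0 ≤ x) :
    (1 - x) * exp x ≤ (1 + x) * exp (-x) := by
  rcases lt_or_ge x 1 with hx1 | hx1
  · have hlog : 2 * x ≤ log (1 + x) - log (1 - x) := by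
      simpa using le_hasSum (hasSum_log_sub_log_of_abs_lt_one (abs_lt.2 ⟨by linarith, hx1⟩)) 0
        fun j _ => by positivity
    have hexp : exp (2 * x) * (1 - x) ≤ 1 + x := by
      rw [← le_div_iff₀ (by linarith), ← exp_log (by positivity : 0 < (1 + x) / (1 - x)),
        log_div (by positivity) (by linarith)]
      exact exp_le_exp.2 hlog
    calc (1 - x) * exp x = exp (2 * x) * (1 - x) * exp (-x) := by
          rw [mul_right_comm, ← exp_add]; ring_nf
      _ ≤ (1 + x) * exp (-x) := by gcongr
  · nlinarith [exp_pos x, exp_pos (-x)]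

lemma exp_neg_mul_pow_natCast_mul (k : ℕ) (y : ℝ) :
    exp (-(k * y)) * (k * y) ^ k = exp (-k) * k ^ k * (y * exp (1 - y)) ^ k := by
  have : exp (-(k * y)) = exp (-k) * exp (k * (1 - y)) := by rw [← exp_add]; ring_nf
  rw [this, mul_pow, mul_pow, ← exp_nat_mul]
  ring

lemma exp_neg_mul_pow_sub_le_add (k : ℕ) {u : ℝ} (hu : 0 ≤ u) (huk : u ≤ k) :
    exp (-(k - u)) * (k - u) ^ k ≤ exp (-(k + u)) * (k + u) ^ k := by
  rcases k.eq_zero_or_pos with rfl | hk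
  · obtain rfl : u = 0 := by simp at huk; linarith
    simp
  have hk' : (0 : ℝ) < k := by exact_mod_cast hk
  set x := u / k
  have hx : 0 ≤ x := by positivity
  have hx1 : x ≤ 1 := div_le_one_of_le₀ huk hk'.le
  have hkx : k * x = u := mul_div_cancel₀ u hk'.ne'
  have hsub : (k : ℝ) - u = k * (1 - x) := by rw [mul_one_sub, hkx]
  have hadd : (k : ℝ) + u = k * (1 + x) := by rw [mul_one_add, hkx]
  rw [hsub, hadd, exp_neg_mul_pow_natCast_mul, exp_neg_mul_pow_natCast_mul, sub_sub_cancel,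
    sub_add_cancel_left]
  have hbase := one_sub_mul_exp_le_one_add_mul_exp_neg hx
  have hbase_nonneg : 0 ≤ (1 - x) * exp x := mul_nonneg (by linarith) (exp_nonneg x)
  gcongr

lemma intervalIntegral_le_integral_Ioi_of_le_reflect {f : ℝ → ℝ} {a c : ℝ} (hac : a ≤ c)
    (hf : Continuous f) (hfi : IntegrableOn f (Ioi c)) (hf0 : ∀ t ∈ Ioi c, 0 ≤ f t)
    (hrefl : ∀ u ∈ Icc 0 (c - a), f (c - u) ≤ f (c + u)) :
    ∫ t in a..c, f t ≤ ∫ t in Ioi c, f t := by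
  calc ∫ t in a..c, f t = ∫ s in c..2 * c - a, f (2 * c - s) := by
        rw [intervalIntegral.integral_comp_sub_left, sub_sub_cancel, two_mul, add_sub_cancel_right]
    _ ≤ ∫ s in c..2 * c - a, f s := by
      refine intervalIntegral.integral_mono_on (by linarith)
        ((hf.comp (by fun_prop)).intervalIntegrable _ _) (hf.intervalIntegrable _ _)
        fun s ⟨hcs, hsa⟩ => ?_
      have h := hrefl (s - c) ⟨by linarith, by linarith⟩
      rwa [show c - (s - c) = 2 * c - s by ring, add_sub_cancel] at h
    _ = ∫ s in Ioc c (2 * c - a), f s := intervalIntegral.integral_of_le (by linarith)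
    _ ≤ ∫ s in Ioi c, f s :=
      setIntegral_mono_set hfi ((ae_restrict_iff' measurableSet_Ioi).2 (.of_forall hf0))
        Ioc_subset_Ioi_self.eventuallyLE

lemma half_le_integral_Ioi_exp_neg_mul_pow_div_factorial (k : ℕ) :
    1 / 2 ≤ ∫ t in Ioi (k : ℝ), exp (-t) * t ^ k / k ! := by
  have hk : (0 : ℝ) ≤ k := k.cast_nonneg
  have htotal : ∫ t in Ioi 0, exp (-t) * t ^ k / k ! = 1 := by
    simp [integral_Ioi_exp_neg_mul_pow_div_factorial k le_rfl, expPartialSum_succ_zero]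
  have hsplit := intervalIntegral.integral_interval_add_Ioi
    (integrableOn_Ioi_exp_neg_mul_pow_div_factorial k le_rfl)
    (integrableOn_Ioi_exp_neg_mul_pow_div_factorial k hk)
  have hle : ∫ t in (0 : ℝ)..k, exp (-t) * t ^ k / k ! ≤
      ∫ t in Ioi (k : ℝ), exp (-t) * t ^ k / k ! :=
    intervalIntegral_le_integral_Ioi_of_le_reflect hk (by fun_prop)
      (integrableOn_Ioi_exp_neg_mul_pow_div_factorial k hk)
      (fun t ht => by have : 0 ≤ t := hk.trans ht.out.le; positivity)
      fun u ⟨hu, huk⟩ => div_le_div_of_nonneg_right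
        (exp_neg_mul_pow_sub_le_add k hu (by simpa using huk)) (by positivity)
  linarith

/-- `∫_{n−1}^∞ e^{-t} t^{n−1} dt ≥ (1/2)(n−1)!`; equivalently a Poisson random variable
with integer parameter `k = n−1` satisfies `P(Poisson(k) ≤ k) ≥ 1/2`. -/
theorem poisson_median (n : ℕ) (hn : 1 ≤ n) :
    (1 / 2 : ℝ) * (Nat.factorial (n - 1) : ℝ)
      ≤ ∫ t in Set.Ioi ((n : ℝ) - 1), Real.exp (-t) * t ^ (n - 1) ∧
    (1 / 2 : ℝ) ≤ Real.exp (-((n : ℝ) - 1)) *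
      ∑ j ∈ Finset.range n, ((n : ℝ) - 1) ^ j / (Nat.factorial j : ℝ) := by
  obtain ⟨k, rfl⟩ := Nat.exists_eq_add_of_le' hn
  simp only [Nat.add_sub_cancel, Nat.cast_add_one, add_sub_cancel_right]
  have hhalf := half_le_integral_Ioi_exp_neg_mul_pow_div_factorial k
  constructor
  · rw [integral_div, le_div_iff₀ (by positivity)] at hhalf
    linarith
  · rwa [integral_Ioi_exp_neg_mul_pow_div_factorial k k.cast_nonneg] at hhalf
end

section
/- Let n ≥ 1 be an integer and let 0 ≤ a ≤ b and c ≥ 0 be real numbers satisfying ∫_a^b e^{-t} t^{n−1} dt = ∫_c^∞ e^{-t} t^{n−1} dt ≤ (1/2)·(n−1)!. Then e^{-a} a^{n−1} + e^{-b} b^{n−1} ≥ e^{-c} c^{n−1}. (In isoperimetric terms: a trapezoid of measure at most 1/2 has boundary measure at least that of the complement of a simplex of the same measure.) -/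
/-!
Write `f t = e^{-t} t^m` with `m = n - 1`, `γ x = ∫₀^x f` and `Γ x = ∫ₓ^∞ f`, so that
`γ + Γ = m!` and the hypotheses read `Γ a - Γ b = Γ c ≤ m!/2`. Pick `β` with `γ β = Γ c`;
then `a ≤ c` and `β ≤ b`. Since `f` is log-concave, `γ / f` is nondecreasing and `Γ / f` is
nonincreasing, so
`f c (m! - Γ c) = f c (γ a + Γ b) ≤ f a γ c + f β Γ b ≤ f a γ c + f b Γ β`,
which is `(f a + f b)(m! - Γ c)`, granted the comparison `f c ≤ f β` of the two tails of
equal mass at most `1/2`.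

That comparison rests on a reflection inequality: if `u ≤ v`, `f u = f v` and the harmonic mean
of `u` and `v` is at most the mode `m`, then `f (u - s) ≤ f (v + s)` for `0 ≤ s < u`, hence
`γ u ≤ ∫ᵥ^{v+u} f`. For `u < v` the harmonic-mean condition follows from `y ≤ sinh y`, and
`u = v = m` shows that the median exceeds the mode.
-/

open MeasureTheory Real Set

theorem setIntegral_Ioi_comp_sub {E : Type*} [NormedAddCommGroup E] [NormedSpace ℝ E]
    (f : ℝ → E) (x d : ℝ) :
    ∫ t in Ioi (x + d), f (t - d) = ∫ t in Ioi x, f t := by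
  rw [← preimage_sub_const_Ioi]
  exact (measurePreserving_sub_right volume d).setIntegral_preimage_emb
    (measurableEmbedding_subRight d) f (Ioi x)

theorem integrableOn_Ioi_comp_sub {E : Type*} [NormedAddCommGroup E] {f : ℝ → E} {x : ℝ}
    (hf : IntegrableOn f (Ioi x)) (d : ℝ) :
    IntegrableOn (fun t => f (t - d)) (Ioi (x + d)) := by
  rw [← preimage_sub_const_Ioi]
  exact ((measurePreserving_sub_right volume d).integrableOn_comp_preimage
    (measurableEmbedding_subRight d)).2 hf

noncomputable section

namespace IncompleteGamma

def gammaDensity (m : ℕ) (t : ℝ) : ℝ := exp (-t) * t ^ m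

/-- `lowerIncGamma m x = γ(m + 1, x)` and `upperIncGamma m x = Γ(m + 1, x)`. -/
def lowerIncGamma (m : ℕ) (x : ℝ) : ℝ := ∫ t in 0..x, gammaDensity m t

def upperIncGamma (m : ℕ) (x : ℝ) : ℝ := ∫ t in Ioi x, gammaDensity m t

variable {m : ℕ}

@[fun_prop]
theorem continuous_gammaDensity (m : ℕ) : Continuous (gammaDensity m) := by
  unfold gammaDensity; fun_prop

theorem gammaDensity_nonneg {t : ℝ} (ht : 0 ≤ t) : 0 ≤ gammaDensity m t := by
  unfold gammaDensity; positivity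

theorem gammaDensity_pos {t : ℝ} (ht : 0 < t) : 0 < gammaDensity m t := by
  unfold gammaDensity; positivity

theorem gammaDensity_eq_exp {t : ℝ} (ht : 0 < t) :
    gammaDensity m t = exp (m * log t - t) := by
  rw [gammaDensity, exp_sub, exp_nat_mul, exp_log ht, exp_neg, div_eq_inv_mul]

theorem integrableOn_gammaDensity_Ioi {c : ℝ} (hc : 0 ≤ c) :
    IntegrableOn (gammaDensity m) (Ioi c) := by
  have h := GammaIntegral_convergent (s := m + 1) (by positivity)
  simp only [add_sub_cancel_right, rpow_natCast] at h
  exact h.mono_set (Ioi_subset_Ioi hc)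

theorem upperIncGamma_zero (m : ℕ) : upperIncGamma m 0 = m.factorial := by
  rw [← Gamma_nat_eq_factorial, Gamma_eq_integral (by positivity)]
  simp only [add_sub_cancel_right, rpow_natCast]
  rfl

theorem upperIncGamma_sub_upperIncGamma {x y : ℝ} (hx : 0 ≤ x) (hxy : x ≤ y) :
    upperIncGamma m x - upperIncGamma m y = ∫ t in x..y, gammaDensity m t :=
  intervalIntegral.integral_Ioi_sub_Ioi (integrableOn_gammaDensity_Ioi hx) hxy

theorem lowerIncGamma_add_upperIncGamma {x : ℝ} (hx : 0 ≤ x) :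
    lowerIncGamma m x + upperIncGamma m x = m.factorial := by
  rw [← upperIncGamma_zero, lowerIncGamma, ← upperIncGamma_sub_upperIncGamma le_rfl hx]
  ring

theorem upperIncGamma_strictAntiOn (m : ℕ) : StrictAntiOn (upperIncGamma m) (Ici 0) := by
  intro x hx y _ hxy
  rw [← sub_pos, upperIncGamma_sub_upperIncGamma hx hxy.le]
  exact intervalIntegral.intervalIntegral_pos_of_pos_on
    ((continuous_gammaDensity m).intervalIntegrable x y)
    (fun t ht => gammaDensity_pos (lt_of_le_of_lt hx ht.1)) hxy

theorem upperIncGamma_pos {x : ℝ} (hx : 0 ≤ x) : 0 < upperIncGamma m x := by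
  have h1 : 0 ≤ upperIncGamma m (x + 1) :=
    setIntegral_nonneg measurableSet_Ioi fun t ht =>
      gammaDensity_nonneg (hx.trans (by linarith [ht.out] : x ≤ t))
  have h2 := upperIncGamma_strictAntiOn m hx (show 0 ≤ x + 1 by linarith) (lt_add_one x)
  linarith

theorem continuous_lowerIncGamma (m : ℕ) : Continuous (lowerIncGamma m) :=
  intervalIntegral.continuous_primitive
    (fun _ _ => (continuous_gammaDensity m).intervalIntegrable _ _) 0

theorem gammaDensity_mul_le_mul_of_add_eq {p q r s : ℝ} (hp : 0 ≤ p) (hpq : p ≤ q)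
    (hpr : p ≤ r) (hsum : p + s = q + r) :
    gammaDensity m p * gammaDensity m s ≤ gammaDensity m q * gammaDensity m r := by
  have hs : s = q + r - p := by linarith
  subst hs
  have hprod : p * (q + r - p) ≤ q * r := by nlinarith
  have hexp : exp (-p) * exp (-(q + r - p)) = exp (-q) * exp (-r) := by
    rw [← exp_add, ← exp_add]; ring_nf
  calc gammaDensity m p * gammaDensity m (q + r - p)
        = exp (-p) * exp (-(q + r - p)) * (p * (q + r - p)) ^ m := by
          rw [gammaDensity, gammaDensity, mul_pow]; ring
    _ ≤ exp (-p) * exp (-(q + r - p)) * (q * r) ^ m := by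
          gcongr
          nlinarith
    _ = gammaDensity m q * gammaDensity m r := by
          rw [hexp, gammaDensity, gammaDensity, mul_pow]; ring

theorem lowerIncGamma_nonneg {x : ℝ} (hx : 0 ≤ x) : 0 ≤ lowerIncGamma m x :=
  intervalIntegral.integral_nonneg hx fun _ ht => gammaDensity_nonneg ht.1

theorem gammaDensity_mul_lowerIncGamma_le {x y : ℝ} (hx : 0 ≤ x) (hxy : x ≤ y) :
    gammaDensity m y * lowerIncGamma m x ≤ gammaDensity m x * lowerIncGamma m y := by
  have hint := (continuous_gammaDensity m).intervalIntegrable (μ := volume)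
  calc gammaDensity m y * lowerIncGamma m x
        = ∫ t in 0..x, gammaDensity m t * gammaDensity m y := by
          rw [lowerIncGamma, mul_comm, intervalIntegral.integral_mul_const]
    _ ≤ ∫ t in 0..x, gammaDensity m x * gammaDensity m (t + (y - x)) := by
          refine intervalIntegral.integral_mono_on hx
            (Continuous.intervalIntegrable (by fun_prop) _ _)
            (Continuous.intervalIntegrable (by fun_prop) _ _) fun t ht => ?_
          exact gammaDensity_mul_le_mul_of_add_eq ht.1 ht.2 (by linarith) (by ring)
    _ = gammaDensity m x * ∫ t in y - x..y, gammaDensity m t := by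
          rw [intervalIntegral.integral_const_mul, intervalIntegral.integral_comp_add_right,
            zero_add, add_sub_cancel]
    _ ≤ gammaDensity m x * lowerIncGamma m y := by
          gcongr
          · exact gammaDensity_nonneg hx
          rw [lowerIncGamma, ← intervalIntegral.integral_add_adjacent_intervals (hint 0 (y - x))
            (hint (y - x) y), le_add_iff_nonneg_left]
          exact lowerIncGamma_nonneg (by linarith)

theorem gammaDensity_mul_upperIncGamma_le {x y : ℝ} (hx : 0 ≤ x) (hxy : x ≤ y) :
    gammaDensity m x * upperIncGamma m y ≤ gammaDensity m y * upperIncGamma m x := by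
  have hint := integrableOn_Ioi_comp_sub (integrableOn_gammaDensity_Ioi (m := m) hx) (y - x)
  have hshift := setIntegral_Ioi_comp_sub (gammaDensity m) x (y - x)
  rw [add_sub_cancel] at hint hshift
  calc gammaDensity m x * upperIncGamma m y
        = ∫ t in Ioi y, gammaDensity m x * gammaDensity m t := by
          rw [upperIncGamma, integral_const_mul]
    _ ≤ ∫ t in Ioi y, gammaDensity m y * gammaDensity m (t - (y - x)) := by
          refine setIntegral_mono_on ((integrableOn_gammaDensity_Ioi (hx.trans hxy)).const_mul _)
            (hint.const_mul _) measurableSet_Ioi fun t ht => ?_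
          exact gammaDensity_mul_le_mul_of_add_eq hx hxy (by linarith [ht.out]) (by ring)
    _ = gammaDensity m y * upperIncGamma m x := by
          rw [integral_const_mul, hshift, upperIncGamma]

theorem gammaDensity_antitoneOn (m : ℕ) : AntitoneOn (gammaDensity m) (Ici (m : ℝ)) := by
  intro x (hx : (m : ℝ) ≤ x) y _ hxy
  obtain rfl | hx0 := (m.cast_nonneg.trans hx).eq_or_lt
  · obtain rfl : m = 0 := by exact_mod_cast hx.antisymm m.cast_nonneg
    simpa [gammaDensity] using hxy
  · have hy0 : 0 < y := hx0.trans_le hxy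
    rw [gammaDensity_eq_exp hx0, gammaDensity_eq_exp hy0, exp_le_exp]
    have hlog : log y - log x ≤ (y - x) / x := by
      rw [← log_div hy0.ne' hx0.ne', sub_div, div_self hx0.ne']
      exact log_le_sub_one_of_pos (by positivity)
    have : m * (log y - log x) ≤ y - x :=
      calc m * (log y - log x) ≤ x * ((y - x) / x) :=
            mul_le_mul hx hlog (sub_nonneg.2 (log_le_log hx0 hxy)) hx0.le
        _ = y - x := by field_simp
    linarith

theorem two_mul_mul_le_of_gammaDensity_eq {u v : ℝ} (hu : 0 < u) (huv : u < v)
    (h : gammaDensity m u = gammaDensity m v) : 2 * u * v ≤ m * (u + v) := by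
  have hv : 0 < v := hu.trans huv
  set y := log v - log u
  have hy : 0 < y := sub_pos.2 (log_lt_log hu huv)
  have hmy : m * y = v - u := by
    rw [gammaDensity_eq_exp hu, gammaDensity_eq_exp hv, exp_eq_exp] at h
    linarith
  have hsinh : 2 * u * v * sinh y = (v - u) * (u + v) := by
    rw [sinh_eq, exp_neg, exp_sub, exp_log hu, exp_log hv]
    field_simp
    ring
  refine le_of_mul_le_mul_right ?_ hy
  calc 2 * u * v * y ≤ 2 * u * v * sinh y := by
        gcongr
        exact self_le_sinh_iff.2 hy.le
    _ = m * (u + v) * y := by rw [hsinh, ← hmy]; ring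

theorem gammaDensity_sub_le_gammaDensity_add {u v s : ℝ} (hu : 0 < u) (huv : u ≤ v)
    (h : gammaDensity m u = gammaDensity m v) (hmean : 2 * u * v ≤ m * (u + v))
    (hs : 0 ≤ s) (hsu : s < u) : gammaDensity m (u - s) ≤ gammaDensity m (v + s) := by
  set φ : ℝ → ℝ := fun x => (m * log (v + x) - (v + x)) - (m * log (u - x) - (u - x))
  have hderiv : ∀ x ∈ Ico 0 u, HasDerivAt φ (m / (v + x) + m / (u - x) - 2) x := by
    intro x ⟨hx, hxu⟩
    have d1 : HasDerivAt (fun x => v + x) 1 x := (hasDerivAt_id x).const_add v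
    have d2 : HasDerivAt (fun x => u - x) (-1) x := (hasDerivAt_id x).const_sub u
    exact ((((d1.log (by linarith)).const_mul _).sub d1).sub
      (((d2.log (by linarith)).const_mul _).sub d2)).congr_deriv (by ring)
  have hmono : MonotoneOn φ (Ico 0 u) := by
    refine monotoneOn_of_hasDerivWithinAt_nonneg (convex_Ico 0 u)
      (f' := fun x => m / (v + x) + m / (u - x) - 2)
      (fun x hx => (hderiv x hx).continuousAt.continuousWithinAt) (fun x hx => ?_) fun x hx => ?_
    · rw [interior_Ico] at hx
      exact (hderiv x (Ioo_subset_Ico_self hx)).hasDerivWithinAt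
    · rw [interior_Ico] at hx
      obtain ⟨hx, hxu⟩ := hx
      have hA : 0 < v + x := by linarith
      have hB : 0 < u - x := by linarith
      rw [sub_nonneg, div_add_div _ _ hA.ne' hB.ne', le_div_iff₀ (by positivity)]
      nlinarith
  have hφ0 : φ 0 = 0 := by
    rw [gammaDensity_eq_exp hu, gammaDensity_eq_exp (hu.trans_le huv), exp_eq_exp] at h
    simp only [φ, add_zero, sub_zero]
    linarith
  have hφs : 0 ≤ φ s := hφ0 ▸ hmono ⟨le_rfl, hu⟩ ⟨hs, hsu⟩ hs
  rw [gammaDensity_eq_exp (by linarith), gammaDensity_eq_exp (by linarith), exp_le_exp]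
  linarith

theorem lowerIncGamma_le_integral_of_gammaDensity_eq {u v : ℝ} (hu : 0 < u) (huv : u ≤ v)
    (h : gammaDensity m u = gammaDensity m v) (hmean : 2 * u * v ≤ m * (u + v)) :
    lowerIncGamma m u ≤ ∫ t in v..v + u, gammaDensity m t :=
  calc lowerIncGamma m u = ∫ s in 0..u, gammaDensity m (u - s) := by
        rw [lowerIncGamma, intervalIntegral.integral_comp_sub_left, sub_self, sub_zero]
    _ ≤ ∫ s in 0..u, gammaDensity m (v + s) :=
        intervalIntegral.integral_mono_on_of_le_Ioo hu.le
          (Continuous.intervalIntegrable (by fun_prop) _ _)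
          (Continuous.intervalIntegrable (by fun_prop) _ _)
          fun s hs => gammaDensity_sub_le_gammaDensity_add hu huv h hmean hs.1.le hs.2
    _ = ∫ t in v..v + u, gammaDensity m t := by
        rw [intervalIntegral.integral_comp_add_left, add_zero]

theorem half_factorial_lt_upperIncGamma_natCast (m : ℕ) :
    (m.factorial : ℝ) / 2 < upperIncGamma m m := by
  rcases m.eq_zero_or_pos with rfl | hm
  · rw [Nat.cast_zero, upperIncGamma_zero]
    norm_num
  · have hm' : (0 : ℝ) < m := by exact_mod_cast hm
    have h := lowerIncGamma_le_integral_of_gammaDensity_eq hm' le_rfl rfl (le_of_eq (by ring))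
    rw [← upperIncGamma_sub_upperIncGamma hm'.le (by linarith)] at h
    linarith [upperIncGamma_pos (m := m) (x := m + m) (by positivity),
      lowerIncGamma_add_upperIncGamma (m := m) hm'.le]

theorem gammaDensity_le_of_lowerIncGamma_eq_upperIncGamma {β c : ℝ} (hβ : 0 ≤ β)
    (hc : 0 ≤ c) (h : lowerIncGamma m β = upperIncGamma m c)
    (hc_half : upperIncGamma m c ≤ m.factorial / 2) :
    gammaDensity m c ≤ gammaDensity m β := by
  have hanti := upperIncGamma_strictAntiOn m
  have hmc : (m : ℝ) < c := (hanti.lt_iff_gt hc (mem_Ici.2 m.cast_nonneg)).1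
    (hc_half.trans_lt (half_factorial_lt_upperIncGamma_natCast m))
  have hβsum := lowerIncGamma_add_upperIncGamma (m := m) hβ
  rcases le_or_gt (m : ℝ) β with hmβ | hβm
  · have hβc : β ≤ c := (hanti.le_iff_ge hc hβ).1 (by linarith)
    exact gammaDensity_antitoneOn m hmβ (hmβ.trans hβc) hβc
  · -- Otherwise some `β' ∈ (β, m]` has `f β' = f c`; reflecting `[0, β']` onto
    -- `[c, c + β']` gives `γ β' < Γ c = γ β`, against `β < β'`.
    by_contra! hlt
    obtain ⟨β', ⟨hββ', hβ'm⟩, hβ'c⟩ := intermediate_value_Ioc hβm.le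
      (continuous_gammaDensity m).continuousOn
      ⟨hlt, gammaDensity_antitoneOn m self_mem_Ici hmc.le hmc.le⟩
    have hβ'0 : 0 < β' := hβ.trans_lt hββ'
    have hβ'c' : β' < c := hβ'm.trans_lt hmc
    have hreflect := lowerIncGamma_le_integral_of_gammaDensity_eq hβ'0 hβ'c'.le hβ'c
      (two_mul_mul_le_of_gammaDensity_eq hβ'0 hβ'c' hβ'c)
    rw [← upperIncGamma_sub_upperIncGamma hc (by linarith)] at hreflect
    linarith [upperIncGamma_pos (m := m) (x := c + β') (by linarith), hanti hβ hβ'0.le hββ',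
      lowerIncGamma_add_upperIncGamma (m := m) hβ'0.le]

theorem gammaDensity_le_add_of_upperIncGamma_sub_eq {a b c : ℝ} (ha : 0 ≤ a) (hab : a ≤ b)
    (hc : 0 ≤ c) (h : upperIncGamma m a - upperIncGamma m b = upperIncGamma m c)
    (hc_half : upperIncGamma m c ≤ m.factorial / 2) :
    gammaDensity m c ≤ gammaDensity m a + gammaDensity m b := by
  have hb : 0 ≤ b := ha.trans hab
  have hanti := upperIncGamma_strictAntiOn m
  set D := (m.factorial : ℝ) - upperIncGamma m c
  have hD : 0 < D := by linarith [upperIncGamma_pos (m := m) hc]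
  have hlc : lowerIncGamma m c = D := by
    linarith [lowerIncGamma_add_upperIncGamma (m := m) hc]
  obtain ⟨β, ⟨hβ, -⟩, hβc⟩ :
      ∃ β ∈ Icc 0 c, lowerIncGamma m β = upperIncGamma m c :=
    intermediate_value_Icc hc (continuous_lowerIncGamma m).continuousOn
      ⟨by simp [lowerIncGamma, (upperIncGamma_pos hc).le], by linarith⟩
  have huβ : upperIncGamma m β = D := by
    linarith [lowerIncGamma_add_upperIncGamma (m := m) hβ]
  have hsplit : lowerIncGamma m a + upperIncGamma m b = D := by
    linarith [lowerIncGamma_add_upperIncGamma (m := m) ha]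
  have hac : a ≤ c := (hanti.le_iff_ge hc ha).1 (by linarith [upperIncGamma_pos (m := m) hb])
  have hβb : β ≤ b :=
    (hanti.le_iff_ge hb hβ).1 (by linarith [lowerIncGamma_nonneg (m := m) ha])
  refine le_of_mul_le_mul_right ?_ hD
  calc gammaDensity m c * D
        = gammaDensity m c * lowerIncGamma m a + gammaDensity m c * upperIncGamma m b := by
          rw [← hsplit]; ring
    _ ≤ gammaDensity m a * lowerIncGamma m c + gammaDensity m b * upperIncGamma m β := by
          gcongr ?_ + ?_
          · exact gammaDensity_mul_lowerIncGamma_le ha hac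
          · calc gammaDensity m c * upperIncGamma m b
                ≤ gammaDensity m β * upperIncGamma m b := by
                  gcongr
                  · exact (upperIncGamma_pos hb).le
                  · exact gammaDensity_le_of_lowerIncGamma_eq_upperIncGamma hβ hc hβc hc_half
              _ ≤ gammaDensity m b * upperIncGamma m β :=
                  gammaDensity_mul_upperIncGamma_le hβ hβb
    _ = (gammaDensity m a + gammaDensity m b) * D := by rw [hlc, huβ]; ring

end IncompleteGamma

end

theorem trapezoid_vs_complement_boundary_general (n : ℕ) (a b c : ℝ)
    (ha : 0 ≤ a) (hab : a ≤ b) (hc : 0 ≤ c)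
    (heq : ∫ t in a..b, Real.exp (-t) * t ^ (n - 1)
      = ∫ t in Set.Ioi c, Real.exp (-t) * t ^ (n - 1))
    (hle : ∫ t in Set.Ioi c, Real.exp (-t) * t ^ (n - 1)
      ≤ (1 / 2 : ℝ) * (Nat.factorial (n - 1) : ℝ)) :
    Real.exp (-c) * c ^ (n - 1)
      ≤ Real.exp (-a) * a ^ (n - 1) + Real.exp (-b) * b ^ (n - 1) :=
  IncompleteGamma.gammaDensity_le_add_of_upperIncGamma_sub_eq ha hab hc
    ((IncompleteGamma.upperIncGamma_sub_upperIncGamma ha hab).trans heq) (hle.trans_eq (by ring))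

/-- A trapezoid of measure at most `1/2` has boundary measure at least that of the
complement of a simplex of the same measure: if `0 ≤ a ≤ b`, `c ≥ 0` and
`∫_a^b e^{-t} t^{n−1} dt = ∫_c^∞ e^{-t} t^{n−1} dt ≤ (n−1)!/2`, then
`e^{-a} a^{n−1} + e^{-b} b^{n−1} ≥ e^{-c} c^{n−1}`. -/
theorem trapezoid_vs_complement_boundary (n : ℕ) (hn : 1 ≤ n) (a b c : ℝ)
    (ha : 0 ≤ a) (hab : a ≤ b) (hc : 0 ≤ c)
    (heq : ∫ t in a..b, Real.exp (-t) * t ^ (n - 1)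
      = ∫ t in Set.Ioi c, Real.exp (-t) * t ^ (n - 1))
    (hle : ∫ t in Set.Ioi c, Real.exp (-t) * t ^ (n - 1)
      ≤ (1 / 2 : ℝ) * (Nat.factorial (n - 1) : ℝ)) :
    Real.exp (-c) * c ^ (n - 1)
      ≤ Real.exp (-a) * a ^ (n - 1) + Real.exp (-b) * b ^ (n - 1) :=
  trapezoid_vs_complement_boundary_general n a b c ha hab hc heq hle
end

section
/- Let n ≥ 1 be an integer and let 0 ≤ a ≤ b and c ≥ 0 be real numbers satisfying ∫_a^b e^{-t} t^{n−1} dt = ∫_0^c e^{-t} t^{n−1} dt ≥ (1/2)·(n−1)!. Then e^{-a} a^{n−1} + e^{-b} b^{n−1} ≥ e^{-c} c^{n−1}. (In isoperimetric terms: a trapezoid of measure at least 1/2 has boundary measure at least that of the simplex of the same measure.) -/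
/-!
With `m = n - 1`, `f t = e^{-t} t^m` and `F x = ∫₀ˣ f`, everything rests on
`t f'(t) = (m - t) f(t)`: a linear inequality between `t` and `m - t` on an interval integrates
to a comparison of `∫ f` with the increment of `f` there. Since the median of `f` is at least
its mode `m`, the hypotheses force `a ≤ c`, `m ≤ c ≤ b` and `F b = F a + F c`.
If `2ab ≤ m(a + b)`, the estimates on `[0, a]` and on `[c, b]` (whose mass is `F a`) combine
directly. Otherwise either `f c ≤ f a`, or there is `p ∈ [a, m]` with `f p = f c`; then `p` and
`c` have harmonic mean at most `m`, which makes the reflection `t ↦ c + p - t` increase `f` on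
`[0, p]`, so `F p + F c ≤ m!`: the mass on `[a, p]` is at most the tail mass beyond `b`, and
comparing both with `f` finishes.
-/

open MeasureTheory Real Set Filter Topology
open scoped Nat

namespace GammaIntegrand

noncomputable def gammaIntegrand (m : ℕ) (t : ℝ) : ℝ := exp (-t) * t ^ m

/-- `lowerGamma m x` is the lower incomplete gamma function `γ(m + 1, x)`. -/
noncomputable def lowerGamma (m : ℕ) (x : ℝ) : ℝ := ∫ t in 0..x, gammaIntegrand m t

variable (m : ℕ)

@[fun_prop]
lemma continuous_gammaIntegrand : Continuous (gammaIntegrand m) := by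
  unfold gammaIntegrand; fun_prop

lemma intervalIntegrable_gammaIntegrand (x y : ℝ) :
    IntervalIntegrable (gammaIntegrand m) volume x y :=
  (continuous_gammaIntegrand m).intervalIntegrable x y

variable {m}

lemma gammaIntegrand_nonneg {t : ℝ} (ht : 0 ≤ t) : 0 ≤ gammaIntegrand m t := by
  unfold gammaIntegrand; positivity

lemma gammaIntegrand_pos {t : ℝ} (ht : 0 < t) : 0 < gammaIntegrand m t := by
  unfold gammaIntegrand; positivity

lemma hasDerivAt_gammaIntegrand {t : ℝ} (ht : t ≠ 0) :
    HasDerivAt (gammaIntegrand m) ((m - t) / t * gammaIntegrand m t) t := by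
  refine (((hasDerivAt_neg t).exp).mul (hasDerivAt_pow m t)).congr_deriv ?_
  unfold gammaIntegrand
  rcases m with _ | m
  · field_simp; simp
  · field_simp
    simp only [Nat.add_sub_cancel, pow_succ]
    push_cast
    ring

lemma strictAntiOn_gammaIntegrand : StrictAntiOn (gammaIntegrand m) (Ici m) := by
  have hpos : ∀ t ∈ interior (Ici (m : ℝ)), 0 < t := fun t ht =>
    (Nat.cast_nonneg m).trans_lt (by rwa [interior_Ici] at ht)
  refine strictAntiOn_of_hasDerivWithinAt_neg (convex_Ici _)
    (continuous_gammaIntegrand m).continuousOn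
    (fun t ht => (hasDerivAt_gammaIntegrand (hpos t ht).ne').hasDerivWithinAt) fun t ht => ?_
  rw [interior_Ici] at ht
  exact mul_neg_of_neg_of_pos (div_neg_of_neg_of_pos (sub_neg.mpr ht) (hpos t (by simpa)))
    (gammaIntegrand_pos (hpos t (by simpa)))

/-- Since `t * f' t = (m - t) * f t`, this is `α * f ≤ β * f'` integrated over `[x, y]`. -/
lemma mul_integral_le_mul_sub {α β x y : ℝ} (hx : 0 ≤ x) (hxy : x ≤ y)
    (h : ∀ t ∈ Ioo x y, α * t ≤ β * (m - t)) :
    α * ∫ t in x..y, gammaIntegrand m t ≤ β * (gammaIntegrand m y - gammaIntegrand m x) := by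
  rw [← intervalIntegral.integral_const_mul, mul_sub]
  refine intervalIntegral.integral_le_sub_of_hasDeriv_right_of_le
    (g := fun t => β * gammaIntegrand m t) hxy (by fun_prop)
    (fun t ht =>
      ((hasDerivAt_gammaIntegrand (hx.trans_lt ht.1).ne').const_mul β).hasDerivWithinAt)
    ((by fun_prop : Continuous _).integrableOn_Icc) (fun t ht => ?_)
  have ht0 : 0 < t := hx.trans_lt ht.1
  rw [div_mul_eq_mul_div, mul_div_assoc', le_div_iff₀ ht0]
  nlinarith [mul_le_mul_of_nonneg_right (h t ht) (gammaIntegrand_nonneg (m := m) ht0.le)]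

lemma lowerGamma_sub_lowerGamma (x y : ℝ) :
    lowerGamma m y - lowerGamma m x = ∫ t in x..y, gammaIntegrand m t :=
  intervalIntegral.integral_interval_sub_left (intervalIntegrable_gammaIntegrand m _ _)
    (intervalIntegrable_gammaIntegrand m _ _)

lemma lowerGamma_nonneg {x : ℝ} (hx : 0 ≤ x) : 0 ≤ lowerGamma m x :=
  intervalIntegral.integral_nonneg hx fun _ ht => gammaIntegrand_nonneg ht.1

lemma strictMonoOn_lowerGamma : StrictMonoOn (lowerGamma m) (Ici 0) := by
  intro x hx y _ hxy
  rw [← sub_pos, lowerGamma_sub_lowerGamma]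
  exact intervalIntegral.intervalIntegral_pos_of_pos_on (intervalIntegrable_gammaIntegrand m _ _)
    (fun t ht => gammaIntegrand_pos ((mem_Ici.mp hx).trans_lt ht.1)) hxy

variable (m)

lemma integrableOn_gammaIntegrand : IntegrableOn (gammaIntegrand m) (Ioi 0) := by
  have h := Real.GammaIntegral_convergent (s := (m : ℝ) + 1) (by positivity)
  simp only [add_sub_cancel_right, Real.rpow_natCast] at h
  exact h

lemma integral_gammaIntegrand : ∫ t in Ioi 0, gammaIntegrand m t = m ! := by
  rw [← Real.Gamma_nat_eq_factorial, Real.Gamma_eq_integral (by positivity)]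
  simp only [add_sub_cancel_right, Real.rpow_natCast]
  rfl

lemma tendsto_lowerGamma : Tendsto (lowerGamma m) atTop (𝓝 (m ! : ℝ)) := by
  rw [← integral_gammaIntegrand]
  exact intervalIntegral_tendsto_integral_Ioi 0 (integrableOn_gammaIntegrand m) tendsto_id

variable {m}

lemma lowerGamma_le_factorial {x : ℝ} (hx : 0 ≤ x) : lowerGamma m x ≤ m ! := by
  rw [← integral_gammaIntegrand, lowerGamma, intervalIntegral.integral_of_le hx]
  exact setIntegral_mono_set (integrableOn_gammaIntegrand m)
    ((ae_restrict_mem measurableSet_Ioi).mono fun t ht => gammaIntegrand_nonneg (le_of_lt ht))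
    Ioc_subset_Ioi_self.eventuallyLE

lemma sub_mul_lowerGamma_le {a : ℝ} (ha : 0 ≤ a) :
    (m - a) * lowerGamma m a ≤ a * gammaIntegrand m a := by
  have h := mul_integral_le_mul_sub (m := m) (α := m - a) (β := a) le_rfl ha
    fun t ht => by nlinarith [ht.2]
  change (m - a) * lowerGamma m a ≤ _ at h
  nlinarith [gammaIntegrand_nonneg (m := m) le_rfl]

lemma sub_mul_factorial_sub_lowerGamma_le {b : ℝ} (hb : 0 ≤ b) :
    (b - m) * ((m ! : ℝ) - lowerGamma m b) ≤ b * gammaIntegrand m b := by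
  refine le_of_tendsto (((tendsto_lowerGamma m).sub_const _).const_mul _)
    (eventually_atTop.mpr ⟨b, fun x hbx => ?_⟩)
  have h := mul_integral_le_mul_sub (m := m) (α := b - m) (β := -b) hb hbx
    fun t ht => by nlinarith [ht.1, Nat.cast_nonneg (α := ℝ) m]
  rw [lowerGamma_sub_lowerGamma]
  nlinarith [gammaIntegrand_nonneg (m := m) (hb.trans hbx)]

lemma hasDerivAt_log_gammaIntegrand {t : ℝ} (ht : 0 < t) :
    HasDerivAt (fun s => log (gammaIntegrand m s)) ((m - t) / t) t := by
  refine ((hasDerivAt_gammaIntegrand ht.ne').log (gammaIntegrand_pos ht).ne').congr_deriv ?_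
  field_simp [(gammaIntegrand_pos (m := m) ht).ne']

/-- The log-derivative `m / t - 1` of `f` at `c + u` outweighs the one at `p - u`, because
`2 (c + u) (p - u) ≤ 2 p c ≤ m (p + c)`. -/
lemma gammaIntegrand_le_gammaIntegrand_add_sub {p c x : ℝ} (hpc : p ≤ c)
    (hf : gammaIntegrand m p ≤ gammaIntegrand m c) (hsum : 2 * p * c ≤ m * (p + c))
    (hx : 0 < x) (hxp : x ≤ p) :
    gammaIntegrand m x ≤ gammaIntegrand m (c + p - x) := by
  set ψ : ℝ → ℝ := fun u => log (gammaIntegrand m (c + u)) - log (gammaIntegrand m (p - u))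
  have hderiv : ∀ u ∈ Icc 0 (p - x),
      HasDerivAt ψ ((m - (c + u)) / (c + u) - -((m - (p - u)) / (p - u))) u := fun u hu =>
    ((hasDerivAt_log_gammaIntegrand (by linarith [hu.1])).comp_const_add c u).sub
      ((hasDerivAt_log_gammaIntegrand (by linarith [hu.2])).comp_const_sub p u)
  have hmono : MonotoneOn ψ (Icc 0 (p - x)) := by
    refine monotoneOn_of_hasDerivWithinAt_nonneg (convex_Icc _ _)
      (fun u hu => (hderiv u hu).continuousAt.continuousWithinAt)
      (fun u hu => (hderiv u (interior_subset hu)).hasDerivWithinAt) fun u hu => ?_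
    rw [interior_Icc] at hu
    have hcu : 0 < c + u := by linarith [hu.1]
    have hpu : 0 < p - u := by linarith [hu.2]
    rw [sub_neg_eq_add, div_add_div _ _ hcu.ne' hpu.ne']
    exact div_nonneg (by nlinarith [hu.1, hu.2]) (by positivity)
  have hψ := hmono ⟨le_rfl, by linarith⟩ ⟨by linarith, le_rfl⟩ (by linarith : 0 ≤ p - x)
  simp only [ψ, add_zero, sub_zero, sub_sub_cancel] at hψ
  have hp : 0 < p := hx.trans_le hxp
  have hlog := log_le_log (gammaIntegrand_pos hp) hf
  rw [← add_sub_assoc] at hψ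
  rw [← log_le_log_iff (gammaIntegrand_pos hx) (gammaIntegrand_pos (by linarith))]
  linarith

lemma lowerGamma_add_lowerGamma_le {p c : ℝ} (hp : 0 < p) (hpc : p ≤ c)
    (hf : gammaIntegrand m p ≤ gammaIntegrand m c) (hsum : 2 * p * c ≤ m * (p + c)) :
    lowerGamma m p + lowerGamma m c ≤ m ! := by
  have hreflect : lowerGamma m p ≤ ∫ t in 0..p, gammaIntegrand m (c + p - t) :=
    intervalIntegral.integral_mono_on_of_le_Ioo hp.le (intervalIntegrable_gammaIntegrand m _ _)
      (((continuous_gammaIntegrand m).comp (continuous_sub_left _)).intervalIntegrable _ _)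
      fun t ht => gammaIntegrand_le_gammaIntegrand_add_sub hpc hf hsum ht.1 ht.2.le
  rw [intervalIntegral.integral_comp_sub_left, sub_zero, add_sub_cancel_right,
    ← lowerGamma_sub_lowerGamma] at hreflect
  linarith [lowerGamma_le_factorial (m := m) (by linarith : 0 ≤ c + p)]

variable (m)

/-- The median of the gamma distribution with shape `m + 1` is at least its mode `m`. -/
lemma lowerGamma_self_le : lowerGamma m m ≤ m ! / 2 := by
  rcases Nat.eq_zero_or_pos m with rfl | hm
  · simp [lowerGamma]
  · have := lowerGamma_add_lowerGamma_le (m := m) (Nat.cast_pos.mpr hm) le_rfl le_rfl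
      (by nlinarith)
    linarith

variable {m}

lemma gammaIntegrand_eq_exp {t : ℝ} (ht : 0 < t) :
    gammaIntegrand m t = exp (m * log t - t) := by
  rw [sub_eq_neg_add, exp_add, ← log_pow, exp_log (pow_pos ht m), gammaIntegrand]

lemma log_le_sub_inv_div_two {r : ℝ} (hr : 1 ≤ r) : log r ≤ (r - r⁻¹) / 2 := by
  rw [← sinh_log (by linarith)]
  exact self_le_sinh_iff.mpr (log_nonneg hr)

/-- `2 * p * q = m * (p + q)` says that the harmonic mean of `p` and `q` is the mode `m`. -/
lemma gammaIntegrand_le_of_two_mul_mul_eq {p q : ℝ} (hp : 0 < p) (hpq : p ≤ q)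
    (h : 2 * p * q = m * (p + q)) : gammaIntegrand m q ≤ gammaIntegrand m p := by
  have hq : 0 < q := hp.trans_le hpq
  rw [gammaIntegrand_eq_exp hp, gammaIntegrand_eq_exp hq, exp_le_exp]
  have hlog := log_le_sub_inv_div_two ((one_le_div hp).mpr hpq)
  rw [log_div hq.ne' hp.ne', inv_div] at hlog
  have hid : (m : ℝ) * ((q / p - p / q) / 2) = q - p := by
    field_simp
    linear_combination (p - q) * h
  nlinarith [mul_le_mul_of_nonneg_left hlog (Nat.cast_nonneg (α := ℝ) m)]

lemma two_mul_mul_le_of_gammaIntegrand_eq {p c : ℝ} (hp : 0 < p) (hpm : p ≤ m) (hmc : m ≤ c)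
    (h : gammaIntegrand m p = gammaIntegrand m c) : 2 * p * c ≤ m * (p + c) := by
  rcases le_or_gt (2 * p) m with h2p | h2p
  · nlinarith
  set q : ℝ := m * p / (2 * p - m)
  have hd : 0 < 2 * p - m := by linarith
  have hqd : q * (2 * p - m) = m * p := div_mul_cancel₀ _ hd.ne'
  have hmq : (m : ℝ) ≤ q := by
    rw [le_div_iff₀ hd]
    nlinarith
  have hfq := gammaIntegrand_le_of_two_mul_mul_eq hp (hpm.trans hmq) (by linear_combination hqd)
  have hcq : c ≤ q := (strictAntiOn_gammaIntegrand.le_iff_ge hmq hmc).mp (hfq.trans h.le)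
  nlinarith [mul_le_mul_of_nonneg_left hcq hd.le]

lemma gammaIntegrand_le_add_of_two_mul_mul_le {a b c : ℝ} (ha : 0 ≤ a) (hc : 0 < c)
    (hcb : c ≤ b) (hF : lowerGamma m b = lowerGamma m a + lowerGamma m c)
    (h : 2 * a * b ≤ m * (a + b)) :
    gammaIntegrand m c ≤ gammaIntegrand m a + gammaIntegrand m b := by
  have hb : 0 < b := hc.trans_le hcb
  have hright : (m - b) * lowerGamma m a ≤ b * (gammaIntegrand m b - gammaIntegrand m c) := by
    have := mul_integral_le_mul_sub (m := m) (α := m - b) (β := b) hc.le hcb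
      fun t ht => by nlinarith [ht.2]
    rwa [← lowerGamma_sub_lowerGamma, hF, add_sub_cancel_right] at this
  have hleft : (b - m) * lowerGamma m a ≤ b * gammaIntegrand m a := by
    rcases ha.eq_or_lt with rfl | ha
    · simpa [lowerGamma] using mul_nonneg hb.le (gammaIntegrand_nonneg (m := m) le_rfl)
    · have := sub_mul_lowerGamma_le (m := m) ha.le
      have hFa := lowerGamma_nonneg (m := m) ha.le
      refine le_of_mul_le_mul_left ?_ ha
      nlinarith [mul_le_mul_of_nonneg_right (by linarith : a * (b - m) ≤ b * (m - a)) hFa]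
  nlinarith

lemma gammaIntegrand_le_add_of_lt_two_mul_mul {a b c : ℝ} (ha : 0 ≤ a) (hac : a ≤ c)
    (hmc : m ≤ c) (hcb : c ≤ b)
    (hF : lowerGamma m b = lowerGamma m a + lowerGamma m c) (h : m * (a + b) < 2 * a * b) :
    gammaIntegrand m c ≤ gammaIntegrand m a + gammaIntegrand m b := by
  have hm : (0 : ℝ) ≤ m := Nat.cast_nonneg m
  have hb : 0 ≤ b := ha.trans (hac.trans hcb)
  have ha0 : 0 < a := by
    rcases ha.eq_or_lt with rfl | ha
    · nlinarith
    · exact ha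
  have hbm : (m : ℝ) < b := by nlinarith
  by_cases hfa : gammaIntegrand m c ≤ gammaIntegrand m a
  · linarith [gammaIntegrand_nonneg (m := m) hb]
  rw [not_le] at hfa
  have ham : a ≤ m := by
    by_contra! ham
    exact hfa.not_ge (strictAntiOn_gammaIntegrand.antitoneOn ham.le (ham.le.trans hac) hac)
  obtain ⟨p, ⟨hap, hpm⟩, hfp⟩ := intermediate_value_Icc ham
    (continuous_gammaIntegrand m).continuousOn
    ⟨hfa.le, strictAntiOn_gammaIntegrand.antitoneOn (mem_Ici.mpr le_rfl) hmc hmc⟩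
  have hp : 0 < p := ha0.trans_le hap
  have hsum := two_mul_mul_le_of_gammaIntegrand_eq hp hpm hmc hfp
  have hreflect := lowerGamma_add_lowerGamma_le hp (hpm.trans hmc) hfp.le hsum
  have hrise : b * (gammaIntegrand m p - gammaIntegrand m a)
      ≤ (b - m) * (lowerGamma m p - lowerGamma m a) := by
    have := mul_integral_le_mul_sub (m := m) (α := m - b) (β := -b) ha hap fun t ht => by
      nlinarith [mul_le_mul_of_nonneg_left ht.1.le (by linarith : (0 : ℝ) ≤ 2 * b - m)]
    rw [← lowerGamma_sub_lowerGamma] at this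
    linarith
  have htail := sub_mul_factorial_sub_lowerGamma_le (m := m) hb
  rw [← hfp]
  refine le_of_mul_le_mul_left ?_ (hm.trans_lt hbm)
  nlinarith [mul_le_mul_of_nonneg_left (by linarith : lowerGamma m p - lowerGamma m a
    ≤ (m ! : ℝ) - lowerGamma m b) (by linarith : (0 : ℝ) ≤ b - m)]

end GammaIntegrand

open GammaIntegrand in
theorem trapezoid_vs_simplex_boundary_general (n : ℕ) (a b c : ℝ)
    (ha : 0 ≤ a) (hab : a ≤ b) (hc : 0 ≤ c)
    (heq : ∫ t in a..b, Real.exp (-t) * t ^ (n - 1)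
      = ∫ t in (0:ℝ)..c, Real.exp (-t) * t ^ (n - 1))
    (hge : (1 / 2 : ℝ) * (Nat.factorial (n - 1) : ℝ)
      ≤ ∫ t in (0:ℝ)..c, Real.exp (-t) * t ^ (n - 1)) :
    Real.exp (-c) * c ^ (n - 1)
      ≤ Real.exp (-a) * a ^ (n - 1) + Real.exp (-b) * b ^ (n - 1) := by
  generalize n - 1 = m at heq hge ⊢
  change gammaIntegrand m c ≤ gammaIntegrand m a + gammaIntegrand m b
  change ∫ t in a..b, gammaIntegrand m t = lowerGamma m c at heq
  change (1 / 2 : ℝ) * m ! ≤ lowerGamma m c at hge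
  have hF : lowerGamma m b = lowerGamma m a + lowerGamma m c := by
    rw [← heq, ← lowerGamma_sub_lowerGamma, add_sub_cancel]
  have hFa := lowerGamma_nonneg (m := m) ha
  have hFb := lowerGamma_le_factorial (m := m) (ha.trans hab)
  have hmono := strictMonoOn_lowerGamma (m := m)
  have hmc : (m : ℝ) ≤ c :=
    (hmono.le_iff_le (mem_Ici.mpr (Nat.cast_nonneg m)) hc).mp (by linarith [lowerGamma_self_le m])
  have hcb : c ≤ b := (hmono.le_iff_le hc (ha.trans hab)).mp (by linarith)
  have hac : a ≤ c := (hmono.le_iff_le ha hc).mp (by linarith)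
  have hc0 : 0 < c := (hmono.lt_iff_lt self_mem_Ici hc).mp <| by
    simpa [lowerGamma] using (by positivity : (0 : ℝ) < 1 / 2 * m !).trans_le hge
  rcases le_or_gt (2 * a * b) (m * (a + b)) with h | h
  · exact gammaIntegrand_le_add_of_two_mul_mul_le ha hc0 hcb hF h
  · exact gammaIntegrand_le_add_of_lt_two_mul_mul ha hac hmc hcb hF h

/-- A trapezoid of measure at least `1/2` has boundary measure at least that of the
simplex of the same measure: if `0 ≤ a ≤ b`, `c ≥ 0` and
`∫_a^b e^{-t} t^{n−1} dt = ∫_0^c e^{-t} t^{n−1} dt ≥ (n−1)!/2`, then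
`e^{-a} a^{n−1} + e^{-b} b^{n−1} ≥ e^{-c} c^{n−1}`. -/
theorem trapezoid_vs_simplex_boundary (n : ℕ) (hn : 1 ≤ n) (a b c : ℝ)
    (ha : 0 ≤ a) (hab : a ≤ b) (hc : 0 ≤ c)
    (heq : ∫ t in a..b, Real.exp (-t) * t ^ (n - 1)
      = ∫ t in (0:ℝ)..c, Real.exp (-t) * t ^ (n - 1))
    (hge : (1 / 2 : ℝ) * (Nat.factorial (n - 1) : ℝ)
      ≤ ∫ t in (0:ℝ)..c, Real.exp (-t) * t ^ (n - 1)) :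
    Real.exp (-c) * c ^ (n - 1)
      ≤ Real.exp (-a) * a ^ (n - 1) + Real.exp (-b) * b ^ (n - 1) :=
  trapezoid_vs_simplex_boundary_general n a b c ha hab hc heq hge
end

section
/- Let n ≥ 1 be an integer and let x, y, z ≥ 0 be real numbers satisfying ∫_x^∞ e^{-t} t^{n−1} dt + ∫_y^∞ e^{-t} t^{n−1} dt = ∫_z^∞ e^{-t} t^{n−1} dt. Then e^{-x} x^{n−1} + e^{-y} y^{n−1} ≥ e^{-z} z^{n−1}. -/
open MeasureTheory Real Set

/-!
Write `f t = e^{-t} t^{n-1}` and `F a = ∫_a^∞ f`. Since `f` is log-concave on `[0, ∞)`, shifting the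
tail integral shows `f z * F x ≤ f x * F z` for `z ≤ x`: the hazard rate `f / F` is nondecreasing.
The hypothesis `F x + F y = F z` forces `z ≤ x` and `z ≤ y`, so
`f z = (f z / F z) (F x + F y) ≤ (f x / F x) F x + (f y / F y) F y = f x + f y`.
-/

theorem le_add_of_monotoneOn_div {α : Type*} [LinearOrder α] {S : Set α} {f F : α → ℝ}
    (hF : AntitoneOn F S) (hF_pos : ∀ a ∈ S, 0 < F a)
    (hratio : MonotoneOn (fun a => f a / F a) S) {x y z : α} (hx : x ∈ S) (hy : y ∈ S)
    (hz : z ∈ S) (h : F x + F y = F z) : f z ≤ f x + f y := by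
  have hFx := hF_pos x hx
  have hFy := hF_pos y hy
  have hzx : z ≤ x := (hF.reflect_lt hx hz (by linarith)).le
  have hzy : z ≤ y := (hF.reflect_lt hy hz (by linarith)).le
  calc f z = f z / F z * F x + f z / F z * F y := by
        rw [← mul_add, h, div_mul_cancel₀ _ (hF_pos z hz).ne']
    _ ≤ f x / F x * F x + f y / F y * F y := by
        gcongr ?_ * _ + ?_ * _
        exacts [hratio hz hx hzx, hratio hz hy hzy]
    _ = f x + f y := by rw [div_mul_cancel₀ _ hFx.ne', div_mul_cancel₀ _ hFy.ne']

section TailIntegral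

variable {f : ℝ → ℝ}

theorem setIntegral_Ioi_comp_add_right (f : ℝ → ℝ) (x c : ℝ) :
    ∫ t in Ioi x, f (t + c) = ∫ t in Ioi (x + c), f t := by
  rw [← (measurePreserving_add_right volume c).setIntegral_preimage_emb
    (MeasurableEquiv.addRight c).measurableEmbedding f (Ioi (x + c))]
  simp

theorem MeasureTheory.IntegrableOn.comp_add_right_Ioi {x c : ℝ} (hf : IntegrableOn f (Ioi (x + c))) :
    IntegrableOn (fun t => f (t + c)) (Ioi x) := by
  have := ((measurePreserving_add_right volume c).integrableOn_comp_preimage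
    (MeasurableEquiv.addRight c).measurableEmbedding (f := f) (s := Ioi (x + c))).2 hf
  simpa [Function.comp_def] using this

theorem setIntegral_Ioi_pos {a : ℝ} (hf : IntegrableOn f (Ioi a))
    (hpos : ∀ t, a < t → 0 < f t) : 0 < ∫ t in Ioi a, f t := by
  have hsupp : Function.support f ∩ Ioi a = Ioi a :=
    inter_eq_right.2 fun t ht => (hpos t ht).ne'
  rw [setIntegral_pos_iff_support_of_nonneg_ae _ hf, hsupp, volume_Ioi]
  · simp
  · filter_upwards [ae_restrict_mem measurableSet_Ioi] with t ht using (hpos t ht).le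

theorem antitoneOn_setIntegral_Ioi {a : ℝ} (hf : IntegrableOn f (Ioi a))
    (hnonneg : ∀ t, a < t → 0 ≤ f t) : AntitoneOn (fun b => ∫ t in Ioi b, f t) (Ici a) := by
  intro b hb c _ hbc
  refine setIntegral_mono_set (hf.mono_set (Ioi_subset_Ioi hb)) ?_
    (Ioi_subset_Ioi hbc).eventuallyLE
  filter_upwards [ae_restrict_mem measurableSet_Ioi] with t ht using hnonneg t (hb.trans_lt ht)

/-- Comparing `∫_x^∞ f` with `∫_z^∞ f = ∫_x^∞ f (· + (z - x))` pointwise. -/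
theorem mul_setIntegral_Ioi_le_mul_setIntegral_Ioi {x z : ℝ} (hf : IntegrableOn f (Ioi z))
    (hzx : z ≤ x) (hf_mul : ∀ t, x < t → f z * f t ≤ f x * f (t + (z - x))) :
    f z * ∫ t in Ioi x, f t ≤ f x * ∫ t in Ioi z, f t := by
  have hshift : IntegrableOn f (Ioi (x + (z - x))) := by rwa [add_sub_cancel]
  rw [← add_sub_cancel x z, ← setIntegral_Ioi_comp_add_right, add_sub_cancel,
    ← integral_const_mul, ← integral_const_mul]
  exact setIntegral_mono_on ((hf.mono_set (Ioi_subset_Ioi hzx)).const_mul _)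
    (hshift.comp_add_right_Ioi.const_mul _) measurableSet_Ioi hf_mul

theorem monotoneOn_div_setIntegral_Ioi {a : ℝ} (hf : IntegrableOn f (Ioi a))
    (hpos : ∀ t, a < t → 0 < f t)
    (hf_mul : ∀ z x t, a ≤ z → z ≤ x → x < t → f z * f t ≤ f x * f (t + (z - x))) :
    MonotoneOn (fun b => f b / ∫ t in Ioi b, f t) (Ici a) := by
  have hF_pos : ∀ b ∈ Ici a, 0 < ∫ t in Ioi b, f t := fun b hb =>
    setIntegral_Ioi_pos (hf.mono_set (Ioi_subset_Ioi hb)) fun t ht => hpos t (hb.trans_lt ht)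
  intro z hz x hx hzx
  rw [div_le_div_iff₀ (hF_pos z hz) (hF_pos x hx)]
  exact mul_setIntegral_Ioi_le_mul_setIntegral_Ioi (hf.mono_set (Ioi_subset_Ioi hz)) hzx
    fun t ht => hf_mul z x t hz hzx ht

end TailIntegral

theorem integrableOn_Ioi_exp_neg_mul_pow (k : ℕ) {a : ℝ} (ha : 0 ≤ a) :
    IntegrableOn (fun t : ℝ => exp (-t) * t ^ k) (Ioi a) := by
  have h := GammaIntegral_convergent (s := k + 1) (by positivity)
  simp only [add_sub_cancel_right, rpow_natCast] at h
  exact h.mono_set (Ioi_subset_Ioi ha)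

/-- Log-concavity of `t ↦ e^{-t} t^k` on `[0, ∞)`: `z t ≤ x (t + z - x)` as `(x - z)(t - x) ≥ 0`. -/
theorem exp_neg_mul_pow_mul_le (k : ℕ) {x z t : ℝ} (hz : 0 ≤ z) (hzx : z ≤ x) (hxt : x ≤ t) :
    exp (-z) * z ^ k * (exp (-t) * t ^ k)
      ≤ exp (-x) * x ^ k * (exp (-(t + (z - x))) * (t + (z - x)) ^ k) := by
  have hexp : exp (-z) * exp (-t) = exp (-x) * exp (-(t + (z - x))) := by
    rw [← exp_add, ← exp_add]; ring_nf
  have hprod : z * t ≤ x * (t + (z - x)) := by nlinarith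
  calc exp (-z) * z ^ k * (exp (-t) * t ^ k) = exp (-z) * exp (-t) * (z * t) ^ k := by ring
    _ ≤ exp (-z) * exp (-t) * (x * (t + (z - x))) ^ k := by
        gcongr
        exact mul_nonneg hz (by linarith)
    _ = exp (-x) * x ^ k * (exp (-(t + (z - x))) * (t + (z - x)) ^ k) := by rw [hexp, mul_pow]; ring

theorem complement_boundary_superadditive_general (n : ℕ) (x y z : ℝ)
    (hx : 0 ≤ x) (hy : 0 ≤ y) (hz : 0 ≤ z)
    (heq : (∫ t in Set.Ioi x, Real.exp (-t) * t ^ (n - 1))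
        + ∫ t in Set.Ioi y, Real.exp (-t) * t ^ (n - 1)
      = ∫ t in Set.Ioi z, Real.exp (-t) * t ^ (n - 1)) :
    Real.exp (-z) * z ^ (n - 1)
      ≤ Real.exp (-x) * x ^ (n - 1) + Real.exp (-y) * y ^ (n - 1) := by
  have hint := integrableOn_Ioi_exp_neg_mul_pow (n - 1) le_rfl
  have hpos : ∀ t : ℝ, 0 < t → 0 < exp (-t) * t ^ (n - 1) := fun t ht =>
    mul_pos (exp_pos _) (pow_pos ht _)
  refine le_add_of_monotoneOn_div (S := Ici 0)
    (antitoneOn_setIntegral_Ioi hint fun t ht => (hpos t ht).le)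
    (fun a ha => setIntegral_Ioi_pos (integrableOn_Ioi_exp_neg_mul_pow _ ha)
      fun t ht => hpos t (ha.trans_lt ht))
    (monotoneOn_div_setIntegral_Ioi hint hpos fun z x t hz hzx hxt =>
      exp_neg_mul_pow_mul_le _ hz hzx hxt.le)
    hx hy hz heq

/-- If `∫_x^∞ e^{-t}t^{n−1}dt + ∫_y^∞ e^{-t}t^{n−1}dt = ∫_z^∞ e^{-t}t^{n−1}dt` with
`x, y, z ≥ 0`, then `e^{-x}x^{n−1} + e^{-y}y^{n−1} ≥ e^{-z}z^{n−1}`. -/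
theorem complement_boundary_superadditive (n : ℕ) (hn : 1 ≤ n) (x y z : ℝ)
    (hx : 0 ≤ x) (hy : 0 ≤ y) (hz : 0 ≤ z)
    (heq : (∫ t in Set.Ioi x, Real.exp (-t) * t ^ (n - 1))
        + ∫ t in Set.Ioi y, Real.exp (-t) * t ^ (n - 1)
      = ∫ t in Set.Ioi z, Real.exp (-t) * t ^ (n - 1)) :
    Real.exp (-z) * z ^ (n - 1)
      ≤ Real.exp (-x) * x ^ (n - 1) + Real.exp (-y) * y ^ (n - 1) :=
  complement_boundary_superadditive_general n x y z hx hy hz heq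
end

section
/- Let n ≥ 2 be an integer and let x, y, z ≥ 0 be real numbers satisfying ∫_x^∞ e^{-t} t^{n−1} dt + ∫_y^∞ e^{-t} t^{n−1} dt = ∫_z^∞ e^{-t} t^{n−1} dt. Then ∫_x^∞ e^{-t} t^{n−2} dt + ∫_y^∞ e^{-t} t^{n−2} dt ≤ ∫_z^∞ e^{-t} t^{n−2} dt. -/
/-!
Write `G_k(r) = ∫_r^∞ e^{-t} t^k dt` and `g_k(r) = e^{-r} r^k`. Integration by parts gives
`G_{k+1} = g_{k+1} + (k+1) G_k`, so with `k + 1 = n - 1` it suffices to show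
`g(z) ≤ g(x) + g(y)` whenever `G(x) + G(y) = G(z)`, where `g = g_{n-1}`, `G = G_{n-1}`.
The hazard rate `g / G` is nondecreasing on `[0, ∞)`: substituting `t = r + s`,
`G(r) / g(r) = ∫_0^∞ e^{-s} (1 + s/r)^{n-1} ds` decreases in `r`. The equation forces
`z ≤ x` and `z ≤ y`, hence `g(z) G(x) ≤ g(x) G(z)` and `g(z) G(y) ≤ g(y) G(z)`; adding these
and using the equation once more gives `g(z) G(z) ≤ (g(x) + g(y)) G(z)`.
-/

open MeasureTheory Real Set Filter Topology

theorem integral_Ioi_comp_add_right {E : Type*} [NormedAddCommGroup E] [NormedSpace ℝ E]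
    (f : ℝ → E) (a d : ℝ) :
    ∫ s in Ioi a, f (s + d) = ∫ t in Ioi (a + d), f t := by
  simpa using (measurePreserving_add_right volume d).setIntegral_preimage_emb
    (measurableEmbedding_addRight d) f (Ioi (a + d))

theorem integrableOn_Ioi_comp_add_right {E : Type*} [NormedAddCommGroup E]
    {f : ℝ → E} {a d : ℝ} (hf : IntegrableOn f (Ioi (a + d))) :
    IntegrableOn (fun s => f (s + d)) (Ioi a) := by
  simpa [Function.comp_def] using
    ((measurePreserving_add_right volume d).integrableOn_comp_preimage
      (measurableEmbedding_addRight d)).2 hf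

theorem integrableOn_exp_neg_mul_pow (k : ℕ) (r : ℝ) :
    IntegrableOn (fun t => exp (-t) * t ^ k) (Ioi r) := by
  have hcont : Continuous fun t : ℝ => exp (-t) * t ^ k := by fun_prop
  have h0 : IntegrableOn (fun t : ℝ => exp (-t) * t ^ k) (Ioi 0) := by
    refine (GammaIntegral_convergent (s := k + 1) (by positivity)).congr_fun
      (fun t _ => ?_) measurableSet_Ioi
    simp [← rpow_natCast]
  rcases le_total 0 r with h | h
  · exact h0.mono_set (Ioi_subset_Ioi h)
  · rw [← Ioc_union_Ioi_eq_Ioi h, integrableOn_union]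
    exact ⟨hcont.integrableOn_Ioc, h0⟩

theorem integral_Ioi_exp_neg_mul_pow_succ (k : ℕ) (r : ℝ) :
    ∫ t in Ioi r, exp (-t) * t ^ (k + 1)
      = exp (-r) * r ^ (k + 1) + (k + 1) * ∫ t in Ioi r, exp (-t) * t ^ k := by
  have hderiv (t : ℝ) : HasDerivAt (fun t => -(exp (-t) * t ^ (k + 1)))
      (exp (-t) * t ^ (k + 1) - (k + 1) * (exp (-t) * t ^ k)) t := by
    have := (((hasDerivAt_neg t).exp).mul (hasDerivAt_pow (k + 1) t)).neg
    refine this.congr_deriv ?_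
    rw [Nat.add_sub_cancel]
    push_cast
    ring
  have hlim : Tendsto (fun t : ℝ => -(exp (-t) * t ^ (k + 1))) atTop (𝓝 0) := by
    simpa [mul_comm] using (tendsto_pow_mul_exp_neg_atTop_nhds_zero (k + 1)).neg
  have hint := (integrableOn_exp_neg_mul_pow (k + 1) r).sub
    ((integrableOn_exp_neg_mul_pow k r).const_mul (k + 1 : ℝ))
  have := integral_Ioi_of_hasDerivAt_of_tendsto' (fun t _ => hderiv t) hint hlim
  rw [integral_sub (integrableOn_exp_neg_mul_pow (k + 1) r)
    ((integrableOn_exp_neg_mul_pow k r).const_mul _), integral_const_mul] at this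
  linarith

theorem integral_Ioi_exp_neg_mul_pow_pos (k : ℕ) {r : ℝ} (hr : 0 ≤ r) :
    0 < ∫ t in Ioi r, exp (-t) * t ^ k := by
  induction k with
  | zero =>
    simp only [pow_zero, mul_one, integral_exp_neg_Ioi]
    exact exp_pos (-r)
  | succ k ih =>
    rw [integral_Ioi_exp_neg_mul_pow_succ]
    positivity

theorem integral_Ioi_exp_neg_mul_pow_le_of_le (k : ℕ) {a b : ℝ} (ha : 0 ≤ a) (hab : a ≤ b) :
    ∫ t in Ioi b, exp (-t) * t ^ k ≤ ∫ t in Ioi a, exp (-t) * t ^ k := by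
  rw [← Ioc_union_Ioi_eq_Ioi hab, setIntegral_union (Ioc_disjoint_Ioi le_rfl) measurableSet_Ioi
    ((integrableOn_exp_neg_mul_pow k a).mono_set Ioc_subset_Ioi_self)
    (integrableOn_exp_neg_mul_pow k b), le_add_iff_nonneg_left]
  exact setIntegral_nonneg measurableSet_Ioc fun t ht => by
    have := ha.trans ht.1.le
    positivity

theorem exp_neg_mul_pow_mul_integral_Ioi_le (k : ℕ) {x z : ℝ} (hz : 0 ≤ z) (hzx : z ≤ x) :
    exp (-z) * z ^ k * ∫ t in Ioi x, exp (-t) * t ^ k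
      ≤ exp (-x) * x ^ k * ∫ t in Ioi z, exp (-t) * t ^ k := by
  have hshift (r : ℝ) : ∫ t in Ioi r, exp (-t) * t ^ k
      = ∫ s in Ioi 0, exp (-(s + r)) * (s + r) ^ k := by
    simpa using (integral_Ioi_comp_add_right (fun t => exp (-t) * t ^ k) 0 r).symm
  have hint (r : ℝ) : IntegrableOn (fun s => exp (-(s + r)) * (s + r) ^ k) (Ioi 0) :=
    integrableOn_Ioi_comp_add_right (f := fun t => exp (-t) * t ^ k)
      (by simpa using integrableOn_exp_neg_mul_pow k r)
  rw [hshift x, hshift z, ← integral_const_mul, ← integral_const_mul]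
  refine setIntegral_mono_on ((hint x).const_mul _) ((hint z).const_mul _) measurableSet_Ioi
    fun s hs => ?_
  have hs : 0 ≤ s := le_of_lt hs
  have hexp : exp (-z) * exp (-(s + x)) = exp (-x) * exp (-(s + z)) := by
    rw [← exp_add, ← exp_add]
    ring_nf
  have hpow : z ^ k * (s + x) ^ k ≤ x ^ k * (s + z) ^ k := by
    rw [← mul_pow, ← mul_pow]
    exact pow_le_pow_left₀ (mul_nonneg hz (by linarith)) (by nlinarith) k
  calc exp (-z) * z ^ k * (exp (-(s + x)) * (s + x) ^ k)
      = exp (-z) * exp (-(s + x)) * (z ^ k * (s + x) ^ k) := by ring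
    _ ≤ exp (-x) * exp (-(s + z)) * (x ^ k * (s + z) ^ k) := by
      rw [hexp]
      gcongr
    _ = exp (-x) * x ^ k * (exp (-(s + z)) * (s + z) ^ k) := by ring

theorem exp_neg_mul_pow_le_add_of_integral_Ioi_add_eq (k : ℕ) {x y z : ℝ}
    (hx : 0 ≤ x) (hy : 0 ≤ y) (hz : 0 ≤ z)
    (h : (∫ t in Ioi x, exp (-t) * t ^ k) + ∫ t in Ioi y, exp (-t) * t ^ k
      = ∫ t in Ioi z, exp (-t) * t ^ k) :
    exp (-z) * z ^ k ≤ exp (-x) * x ^ k + exp (-y) * y ^ k := by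
  have hzx : z ≤ x := by
    by_contra! hxz
    have := integral_Ioi_exp_neg_mul_pow_le_of_le k hx hxz.le
    have := integral_Ioi_exp_neg_mul_pow_pos k hy
    linarith
  have hzy : z ≤ y := by
    by_contra! hyz
    have := integral_Ioi_exp_neg_mul_pow_le_of_le k hy hyz.le
    have := integral_Ioi_exp_neg_mul_pow_pos k hx
    linarith
  refine le_of_mul_le_mul_right ?_ (integral_Ioi_exp_neg_mul_pow_pos k hz)
  calc exp (-z) * z ^ k * ∫ t in Ioi z, exp (-t) * t ^ k
      = exp (-z) * z ^ k * (∫ t in Ioi x, exp (-t) * t ^ k)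
        + exp (-z) * z ^ k * ∫ t in Ioi y, exp (-t) * t ^ k := by rw [← h, mul_add]
    _ ≤ exp (-x) * x ^ k * (∫ t in Ioi z, exp (-t) * t ^ k)
        + exp (-y) * y ^ k * ∫ t in Ioi z, exp (-t) * t ^ k :=
      add_le_add (exp_neg_mul_pow_mul_integral_Ioi_le k hz hzx)
        (exp_neg_mul_pow_mul_integral_Ioi_le k hz hzy)
    _ = (exp (-x) * x ^ k + exp (-y) * y ^ k) * ∫ t in Ioi z, exp (-t) * t ^ k := by ring

/-- If `∫_x^∞ e^{-t}t^{n−1}dt + ∫_y^∞ e^{-t}t^{n−1}dt = ∫_z^∞ e^{-t}t^{n−1}dt` with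
`x, y, z ≥ 0` and `n ≥ 2`, then
`∫_x^∞ e^{-t}t^{n−2}dt + ∫_y^∞ e^{-t}t^{n−2}dt ≤ ∫_z^∞ e^{-t}t^{n−2}dt`. -/
theorem complement_integral_inequality (n : ℕ) (hn : 2 ≤ n) (x y z : ℝ)
    (hx : 0 ≤ x) (hy : 0 ≤ y) (hz : 0 ≤ z)
    (heq : (∫ t in Set.Ioi x, Real.exp (-t) * t ^ (n - 1))
        + ∫ t in Set.Ioi y, Real.exp (-t) * t ^ (n - 1)
      = ∫ t in Set.Ioi z, Real.exp (-t) * t ^ (n - 1)) :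
    (∫ t in Set.Ioi x, Real.exp (-t) * t ^ (n - 2))
        + ∫ t in Set.Ioi y, Real.exp (-t) * t ^ (n - 2)
      ≤ ∫ t in Set.Ioi z, Real.exp (-t) * t ^ (n - 2) := by
  obtain ⟨m, rfl⟩ : ∃ m, n = m + 2 := ⟨n - 2, by omega⟩
  simp only [show m + 2 - 1 = m + 1 from rfl, Nat.add_sub_cancel] at heq ⊢
  have hboundary := exp_neg_mul_pow_le_add_of_integral_Ioi_add_eq (m + 1) hx hy hz heq
  simp only [integral_Ioi_exp_neg_mul_pow_succ] at heq
  refine le_of_mul_le_mul_left ?_ (by positivity : (0 : ℝ) < m + 1)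
  linarith
end
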